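/- arXiv:2012.13898 — 8 statements merged into one kernel-verified Lean document; each statement's English description precedes it below -/
import Mathlib

section
/- Let G be a finite group, H a normal subgroup of G, π : G → G/H the canonical epimorphism, T a subset of G/H with H ∉ T and T = T⁻¹, and S a subset of H with e ∉ S and S = S⁻¹. Let Γ₁ = Cay(G/H, T) and Γ₂ = Cay(H, S). Then the lexicographic product Γ₁[Γ₂] is isomorphic to the Cayley graph Cay(G, π⁻¹(T) ∪ S). -/
/-- The Cayley graph of a group `G` with connection set `S`. When `1 ∉ S` and
`S = S⁻¹`, its adjacency is: `g` is adjacent to `h` iff `h * g⁻¹ ∈ S`. -/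
def cayleyGraph (G : Type) [Group G] (S : Set G) : SimpleGraph G where
  Adj g h := g ≠ h ∧ h * g⁻¹ ∈ S ∧ g * h⁻¹ ∈ S
  symm := by constructor; rintro g h ⟨h1, h2, h3⟩; exact ⟨h1.symm, h3, h2⟩
  loopless := by constructor; rintro g ⟨h1, -⟩; exact h1 rfl

/-- The lexicographic product `Γ₁[Γ₂]` of two graphs. -/
def lexProd {V₁ V₂ : Type} (Γ₁ : SimpleGraph V₁) (Γ₂ : SimpleGraph V₂) :
    SimpleGraph (V₁ × V₂) where
  Adj v u := Γ₁.Adj v.1 u.1 ∨ (v.1 = u.1 ∧ Γ₂.Adj v.2 u.2)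
  symm := by
    constructor
    rintro v u (h | ⟨h, h'⟩)
    · exact Or.inl h.symm
    · exact Or.inr ⟨h.symm, h'.symm⟩
  loopless := by
    constructor
    rintro v (h | ⟨-, h⟩)
    · exact Γ₁.irrefl h
    · exact Γ₂.irrefl h

namespace QuotientGroup

variable {G : Type*} [Group G] {H : Subgroup G} [H.Normal]

theorem mk_mul_of_mem_left {h : G} (hh : h ∈ H) (g : G) : ((h * g : G) : G ⧸ H) = g := by
  simp [(eq_one_iff h).2 hh]

variable (H) in
/-- Coset representatives are multiplied on the right, so that two points of one fibre differ
by a left factor `h' * h⁻¹ ∈ H`, which is how Cayley adjacency is measured. -/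
noncomputable def quotientProdSubgroupEquiv : (G ⧸ H) × H ≃ G where
  toFun p := p.2 * p.1.out
  invFun g := (g, ⟨g * (g : G ⧸ H).out⁻¹, by simp [← eq_one_iff]⟩)
  left_inv p := by ext <;> simp [mk_mul_of_mem_left p.2.2]
  right_inv g := by simp

@[simp]
theorem mk_quotientProdSubgroupEquiv (p : (G ⧸ H) × H) :
    (quotientProdSubgroupEquiv H p : G ⧸ H) = p.1 :=
  (mk_mul_of_mem_left p.2.2 _).trans p.1.out_eq

theorem quotientProdSubgroupEquiv_mul_inv_of_fst_eq (q : G ⧸ H) (h h' : H) :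
    quotientProdSubgroupEquiv H (q, h') * (quotientProdSubgroupEquiv H (q, h))⁻¹ =
      ((h' * h⁻¹ : H) : G) := by
  simp [quotientProdSubgroupEquiv, mul_assoc]

theorem quotientProdSubgroupEquiv_mul_inv_mem_iff {T : Set (G ⧸ H)} {S : Set G}
    (hSH : S ⊆ H) (p p' : (G ⧸ H) × H) :
    quotientProdSubgroupEquiv H p' * (quotientProdSubgroupEquiv H p)⁻¹ ∈ (↑) ⁻¹' T ∪ S ↔
      p'.1 * p.1⁻¹ ∈ T ∨ p.1 = p'.1 ∧ ((p'.2 * p.2⁻¹ : H) : G) ∈ S := by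
  obtain ⟨q, h⟩ := p
  obtain ⟨q', h'⟩ := p'
  have hmk : ((quotientProdSubgroupEquiv H (q', h') * (quotientProdSubgroupEquiv H (q, h))⁻¹ :
      G) : G ⧸ H) = q' * q⁻¹ := by
    simp
  rw [Set.mem_union, Set.mem_preimage, hmk]
  refine or_congr_right ⟨fun hS ↦ ?_, ?_⟩
  · have hq : q = q' := by
      have := (eq_one_iff _).2 (hSH hS)
      rwa [hmk, mul_inv_eq_one, eq_comm] at this
    subst hq
    exact ⟨rfl, by rwa [quotientProdSubgroupEquiv_mul_inv_of_fst_eq] at hS⟩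
  · rintro ⟨rfl, hS⟩
    rwa [quotientProdSubgroupEquiv_mul_inv_of_fst_eq]

end QuotientGroup

open QuotientGroup

noncomputable def lexProdCayleyGraphIso {G : Type} [Group G] {H : Subgroup G} [H.Normal]
    {T : Set (G ⧸ H)} {S : Set G} (hSH : S ⊆ H) (hT1 : 1 ∉ T) :
    lexProd (cayleyGraph (G ⧸ H) T) (cayleyGraph H (Subtype.val ⁻¹' S)) ≃g
      cayleyGraph G ((↑) ⁻¹' T ∪ S) where
  toEquiv := quotientProdSubgroupEquiv H
  map_rel_iff' {p p'} := by
    obtain ⟨q, h⟩ := p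
    obtain ⟨q', h'⟩ := p'
    change _ ≠ _ ∧ _ ∈ _ ∧ _ ∈ _ ↔ (q ≠ q' ∧ _ ∈ T ∧ _ ∈ T) ∨ (q = q' ∧ h ≠ h' ∧ _ ∈ S ∧ _ ∈ S)
    rw [quotientProdSubgroupEquiv_mul_inv_mem_iff hSH, quotientProdSubgroupEquiv_mul_inv_mem_iff hSH,
      (quotientProdSubgroupEquiv H).injective.ne_iff]
    by_cases hq : q = q'
    -- inside one fibre the difference lies over `1 ∉ T`, so only `S` can join the two points
    · subst hq
      simp [hT1]
    · simp [hq, Ne.symm hq]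

theorem stmt2_general {G : Type} [Group G] (H : Subgroup G) [H.Normal]
    (T : Set (G ⧸ H)) (S : Set G) (hSH : S ⊆ (H : Set G))
    (hT1 : (1 : G ⧸ H) ∉ T) :
    Nonempty
      (lexProd (cayleyGraph (G ⧸ H) T) (cayleyGraph ↥H (Subtype.val ⁻¹' S)) ≃g
        cayleyGraph G (((QuotientGroup.mk : G → G ⧸ H) ⁻¹' T) ∪ S)) :=
  ⟨lexProdCayleyGraphIso hSH hT1⟩

theorem stmt2 {G : Type} [Group G] (H : Subgroup G) [H.Normal]
    (T : Set (G ⧸ H)) (S : Set G) (hSH : S ⊆ (H : Set G))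
    (hT1 : (1 : G ⧸ H) ∉ T) (hTinv : ∀ t ∈ T, t⁻¹ ∈ T)
    (hS1 : (1 : G) ∉ S) (hSinv : ∀ s ∈ S, s⁻¹ ∈ S) :
    Nonempty
      (lexProd (cayleyGraph (G ⧸ H) T) (cayleyGraph ↥H (Subtype.val ⁻¹' S)) ≃g
        cayleyGraph G (((QuotientGroup.mk : G → G ⧸ H) ⁻¹' T) ∪ S)) :=
  stmt2_general H T S hSH hT1
end

section
/- Let p be a prime with p ≡ 1 (mod 4), and let Q denote the set of nonzero squares in ℤ/pℤ. Then: the number of z ∈ Q with z+1 ∈ Q equals (p−5)/4; the number of z ∈ Q with z+1 ∉ Q ∪ {0} equals (p−1)/4; the number of nonzero z ∉ Q with z+1 ∈ Q equals (p−1)/4; and the number of nonzero z ∉ Q with z+1 ∉ Q ∪ {0} equals (p−1)/4. -/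
/-- The set of nonzero squares in `ZMod p`. -/
def nonzeroSquares (p : ℕ) : Set (ZMod p) := {z | z ≠ 0 ∧ ∃ w : ZMod p, z = w ^ 2}

/-!
Write `χ` for the quadratic character and take `ε, δ = ±1`. Away from `z = 0` and `z = -1` the
product `(1 + ε χ z) (1 + δ χ (z + 1))` is `4` or `0` according as `χ z = ε ∧ χ (z + 1) = δ` or
not. Summing it over the whole field, `∑ χ z = 0` and the Jacobi sum `∑ χ z χ (z + 1) = -1` give
`4 N(ε, δ) = q - 2 - ε χ(-1) - δ - ε δ`, and `χ (-1) = 1` when `p ≡ 1 (mod 4)`.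
-/

open Finset

section FiniteField

variable {F : Type*} [Field F] [Fintype F] [DecidableEq F]

lemma sum_quadraticChar_add (hF : ringChar F ≠ 2) (a : F) :
    ∑ z : F, quadraticChar F (z + a) = 0 :=
  (Equiv.sum_comp (Equiv.addRight a) (quadraticChar F)).trans (quadraticChar_sum_zero hF)

lemma sum_quadraticChar_mul_quadraticChar_add_one (hF : ringChar F ≠ 2) :
    ∑ z : F, quadraticChar F z * quadraticChar F (z + 1) = -1 := by
  set χ := quadraticChar F
  have hJ : jacobiSum χ χ = -χ (-1) := by
    simpa only [(quadraticChar_isQuadratic F).inv] using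
      jacobiSum_nontrivial_inv (quadraticChar_ne_one hF)
  have hneg : jacobiSum χ χ = χ (-1) * ∑ z : F, χ z * χ (z + 1) := by
    rw [jacobiSum, ← Equiv.sum_comp (Equiv.neg F), mul_sum]
    refine sum_congr rfl fun z _ => ?_
    rw [Equiv.neg_apply, sub_neg_eq_add, add_comm 1 z, neg_eq_neg_one_mul, map_mul]
    ring
  have hsq : χ (-1) * χ (-1) = 1 := by
    rw [← map_mul, neg_one_mul, neg_neg, map_one]
  calc ∑ z : F, χ z * χ (z + 1)
      = χ (-1) * (χ (-1) * ∑ z : F, χ z * χ (z + 1)) := by rw [← mul_assoc, hsq, one_mul]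
    _ = -1 := by rw [← hneg, hJ, mul_neg, hsq]

lemma one_add_mul_quadraticChar_mul_eq_ite (ε δ : ℤ) (hε : ε = 1 ∨ ε = -1) (hδ : δ = 1 ∨ δ = -1)
    (z : F) :
    (1 + ε * quadraticChar F z) * (1 + δ * quadraticChar F (z + 1)) =
      (if quadraticChar F z = ε ∧ quadraticChar F (z + 1) = δ then 4 else 0) +
      (if z = 0 then 1 + δ else 0) + (if z = -1 then 1 + ε * quadraticChar F (-1) else 0) := by
  by_cases h0 : z = 0
  · subst h0
    have : (0 : F) ≠ -1 := by simp
    rcases hε with rfl | rfl <;> simp [this]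
  by_cases h1 : z = -1
  · subst h1
    rcases hδ with rfl | rfl <;> simp [h0]
  have h1' : z + 1 ≠ 0 := fun h => h1 (eq_neg_of_add_eq_zero_left h)
  rcases quadraticChar_dichotomy h0 with hz | hz <;>
    rcases quadraticChar_dichotomy h1' with hz' | hz' <;>
    rcases hε with rfl | rfl <;> rcases hδ with rfl | rfl <;> simp [hz, hz', h0, h1]

theorem four_mul_card_quadraticChar_eq (hF : ringChar F ≠ 2) (ε δ : ℤ)
    (hε : ε = 1 ∨ ε = -1) (hδ : δ = 1 ∨ δ = -1) :
    4 * (#{z : F | quadraticChar F z = ε ∧ quadraticChar F (z + 1) = δ} : ℤ) =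
      Fintype.card F - 2 - ε * quadraticChar F (-1) - δ - ε * δ := by
  have hsum := sum_congr rfl fun (z : F) (_ : z ∈ univ) =>
    one_add_mul_quadraticChar_mul_eq_ite ε δ hε hδ z
  have hexpand : ∀ a b : ℤ, (1 + ε * a) * (1 + δ * b) = 1 + ε * a + δ * b + ε * δ * (a * b) :=
    fun a b => by ring
  simp only [hexpand, sum_add_distrib, ← mul_sum, quadraticChar_sum_zero hF,
    sum_quadraticChar_add hF, sum_quadraticChar_mul_quadraticChar_add_one hF, sum_ite_eq',
    mem_univ, if_true, sum_ite, sum_const, card_univ, nsmul_eq_mul, smul_zero] at hsum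
  linarith

end FiniteField

section ZMod

variable {p : ℕ} [Fact p.Prime]

lemma mem_nonzeroSquares_iff {z : ZMod p} :
    z ∈ nonzeroSquares p ↔ quadraticChar (ZMod p) z = 1 := by
  by_cases hz : z = 0
  · simp [hz, nonzeroSquares]
  · rw [quadraticChar_one_iff_isSquare hz]
    simp [nonzeroSquares, hz, IsSquare, sq]

lemma quadraticChar_eq_neg_one_iff {z : ZMod p} :
    quadraticChar (ZMod p) z = -1 ↔ z ∉ nonzeroSquares p ∧ z ≠ 0 := by
  by_cases hz : z = 0
  · simp [hz]
  · rw [quadraticChar_eq_neg_one_iff_not_one hz, mem_nonzeroSquares_iff]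
    simp [hz]

lemma ncard_setOf_eq_of_iff_quadraticChar (hp : p % 4 = 1) {P : ZMod p → Prop} (ε δ : ℤ)
    (hε : ε = 1 ∨ ε = -1) (hδ : δ = 1 ∨ δ = -1) {c : ℕ} (hc : (c : ℤ) = 2 + ε + δ + ε * δ)
    (hP : ∀ z, P z ↔ quadraticChar (ZMod p) z = ε ∧ quadraticChar (ZMod p) (z + 1) = δ) :
    {z | P z}.ncard = (p - c) / 4 := by
  have hchar : ringChar (ZMod p) ≠ 2 := by rw [ZMod.ringChar_zmod_n]; omega
  have hneg : quadraticChar (ZMod p) (-1) = 1 :=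
    (quadraticChar_one_iff_isSquare (neg_ne_zero.mpr one_ne_zero)).mpr
      (FiniteField.isSquare_neg_one_iff.mpr (by rw [ZMod.card]; omega))
  have h := four_mul_card_quadraticChar_eq hchar ε δ hε hδ
  rw [ZMod.card, hneg, mul_one] at h
  classical
  rw [Set.ncard_eq_toFinset_card', Set.toFinset_ofPred, filter_congr fun z _ => hP z]
  omega

end ZMod

theorem stmt4 (p : ℕ) (hp : p.Prime) (hmod : p % 4 = 1) :
    {z : ZMod p | z ∈ nonzeroSquares p ∧ z + 1 ∈ nonzeroSquares p}.ncard = (p - 5) / 4 ∧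
    {z : ZMod p | z ∈ nonzeroSquares p ∧ z + 1 ∉ nonzeroSquares p ∧ z + 1 ≠ 0}.ncard
      = (p - 1) / 4 ∧
    {z : ZMod p | z ≠ 0 ∧ z ∉ nonzeroSquares p ∧ z + 1 ∈ nonzeroSquares p}.ncard
      = (p - 1) / 4 ∧
    {z : ZMod p | z ≠ 0 ∧ z ∉ nonzeroSquares p ∧ z + 1 ∉ nonzeroSquares p ∧ z + 1 ≠ 0}.ncard
      = (p - 1) / 4 := by
  have := Fact.mk hp
  refine ⟨?_, ?_, ?_, ?_⟩
  · refine ncard_setOf_eq_of_iff_quadraticChar hmod 1 1 (by simp) (by simp) (by simp) fun z => ?_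
    rw [mem_nonzeroSquares_iff, mem_nonzeroSquares_iff]
  · refine ncard_setOf_eq_of_iff_quadraticChar hmod 1 (-1) (by simp) (by simp) (by simp) fun z => ?_
    rw [quadraticChar_eq_neg_one_iff, mem_nonzeroSquares_iff]
  · refine ncard_setOf_eq_of_iff_quadraticChar hmod (-1) 1 (by simp) (by simp) (by simp) fun z => ?_
    rw [quadraticChar_eq_neg_one_iff, mem_nonzeroSquares_iff (z := z + 1)]
    tauto
  · refine ncard_setOf_eq_of_iff_quadraticChar hmod (-1) (-1) (by simp) (by simp) (by simp)
      fun z => ?_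
    rw [quadraticChar_eq_neg_one_iff, quadraticChar_eq_neg_one_iff]
    tauto
end

section
/- Let p be a prime with p ≡ 1 (mod 3), let C denote the set of nonzero cubes in ℤ/pℤ, and let N be the number of z ∈ C such that z+1 ∈ C. Then there exist integers x and y such that 4p = x² + 27y², x ≡ 1 (mod 3), and 9N = p − 8 + x. -/
/-!
Let `χ` be a cubic character of `𝔽_p` and `J = J(χ, χ)`. The function `1 + χ + χ²` is three times
the indicator of the nonzero cubes, so expanding `∑_z (1 + χ + χ²)(z) (1 + χ + χ²)(z + 1)` gives
`9N` as a sum of nine Jacobi sums; since `χ(-1) = 1` and `χ² = χ⁻¹ = χ̄`, they add up to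
`p - 8 + J + J̄`. Moreover `J ≡ -1 mod 3` in `ℤ[ζ]`, i.e. `J = a + bζ` with `a ≡ -1` and `3 ∣ b`,
and `J J̄ = p = a² - ab + b²`. Hence `x = J + J̄ = 2a - b` and `y = b / 3` do the job,
because `4(a² - ab + b²) = (2a - b)² + 3b²`.
-/

/-- The set of nonzero cubes in `ZMod p`. -/
def nonzeroCubes (p : ℕ) : Set (ZMod p) := {z | z ≠ 0 ∧ ∃ w : ZMod p, z = w ^ 3}

open Finset Complex ComplexConjugate

namespace MulChar

variable {F R : Type*} [Field F] [Finite F] [CommRing R]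

lemma apply_eq_one_iff_exists_pow_orderOf (χ : MulChar F R) {a : F} (ha : a ≠ 0) :
    χ a = 1 ↔ ∃ w, a = w ^ orderOf χ := by
  constructor
  · intro h
    obtain ⟨g, hg⟩ := IsCyclic.exists_generator (α := Fˣ)
    have hord : orderOf (χ g) = orderOf χ := by
      refine orderOf_eq_orderOf_iff.mpr fun m => ?_
      rw [MulChar.eq_iff hg, pow_apply_coe, one_apply_coe]
    obtain ⟨k, hk : g ^ k = _⟩ : ha.isUnit.unit ∈ Submonoid.powers g :=
      mem_powers_iff_mem_zpowers.mpr (hg _)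
    have hak : a = (g : F) ^ k := by rw [← Units.val_pow_eq_pow_val, hk, IsUnit.unit_spec]
    obtain ⟨m, rfl⟩ : orderOf χ ∣ k := by
      rw [← hord]
      exact orderOf_dvd_of_pow_eq_one (by rw [← map_pow, ← hak, h])
    exact ⟨(g : F) ^ m, by rw [hak, ← pow_mul, mul_comm]⟩
  · rintro ⟨w, rfl⟩
    have hw : IsUnit w := (pow_ne_zero_iff χ.orderOf_pos.ne').mp ha |>.isUnit
    rw [map_pow, ← pow_apply' χ χ.orderOf_pos.ne', pow_orderOf_eq_one, one_apply hw]

open Classical in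
lemma sum_range_orderOf_pow_apply [IsDomain R] (χ : MulChar F R) (a : F) :
    ∑ i ∈ range (orderOf χ), (χ ^ i) a =
      if a ≠ 0 ∧ ∃ w, a = w ^ orderOf χ then (orderOf χ : R) else 0 := by
  rcases eq_or_ne a 0 with rfl | ha
  · simp
  have hpow : ∀ i, (χ ^ i) a = χ a ^ i := fun i => by
    simpa using pow_apply_coe χ i ha.isUnit.unit
  simp only [hpow, ne_eq, ha, not_false_eq_true, true_and,
    ← apply_eq_one_iff_exists_pow_orderOf χ ha]
  split_ifs with h
  · simp [h]
  · have hroot : χ a ^ orderOf χ = 1 := by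
      rw [← hpow, pow_orderOf_eq_one, one_apply ha.isUnit]
    have hgeom := geom_sum_mul (χ a) (orderOf χ)
    rw [hroot, sub_self] at hgeom
    exact (mul_eq_zero.mp hgeom).resolve_right (sub_ne_zero.mpr h)

end MulChar

lemma jacobiSum_eq_sum_apply_mul_apply_add_one {F R : Type*} [CommRing F] [Fintype F] [CommRing R]
    {φ : MulChar F R} (hφ : φ (-1) = 1) (ψ : MulChar F R) :
    jacobiSum φ ψ = ∑ z, φ z * ψ (z + 1) := by
  refine Fintype.sum_equiv (Equiv.neg F) _ _ fun z => ?_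
  rw [Equiv.neg_apply, neg_eq_neg_one_mul, map_mul, hφ, one_mul, neg_one_mul, neg_add_eq_sub]

section Count

variable {F R : Type*} [Field F] [Fintype F] [CommRing R] [IsDomain R]

theorem orderOf_sq_mul_ncard_eq_sum_jacobiSum (χ : MulChar F R) (hχ : χ (-1) = 1) :
    ((orderOf χ ^ 2 * {z : F | (z ≠ 0 ∧ ∃ w, z = w ^ orderOf χ) ∧
      (z + 1 ≠ 0 ∧ ∃ w, z + 1 = w ^ orderOf χ)}.ncard : ℕ) : R) =
      ∑ i ∈ range (orderOf χ), ∑ j ∈ range (orderOf χ), jacobiSum (χ ^ i) (χ ^ j) := by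
  classical
  have hpow : ∀ i, (χ ^ i) (-1) = 1 := fun i => by
    simpa [hχ] using χ.pow_apply_coe i (-1)
  calc
    _ = ∑ z, (∑ i ∈ range (orderOf χ), (χ ^ i) z) *
          ∑ j ∈ range (orderOf χ), (χ ^ j) (z + 1) := by
      simp only [MulChar.sum_range_orderOf_pow_apply, ite_zero_mul_ite_zero]
      rw [Set.ncard_eq_toFinset_card', Set.toFinset_ofPred, card_filter, Nat.cast_mul,
        Nat.cast_sum, mul_sum]
      refine sum_congr rfl fun z _ => ?_
      split_ifs <;> simp [sq]
    _ = ∑ i ∈ range (orderOf χ), ∑ j ∈ range (orderOf χ), ∑ z, (χ ^ i) z * (χ ^ j) (z + 1) := by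
      simp_rw [sum_mul_sum]
      rw [sum_comm]
      exact sum_congr rfl fun i _ => sum_comm
    _ = _ := by simp_rw [jacobiSum_eq_sum_apply_mul_apply_add_one (hpow _)]

end Count

lemma exists_int_add_int_mul_of_mem_adjoin {A : Type*} [CommRing A] {ζ : A}
    (hζ : ζ ^ 2 + ζ + 1 = 0) {z : A} (hz : z ∈ Algebra.adjoin ℤ {ζ}) :
    ∃ a b : ℤ, z = a + b * ζ := by
  induction hz using Algebra.adjoin_induction with
  | mem x hx => exact ⟨0, 1, by rw [Set.mem_singleton_iff.mp hx]; simp⟩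
  | algebraMap r => exact ⟨r, 0, by simp⟩
  | add x y _ _ ihx ihy =>
    obtain ⟨a, b, rfl⟩ := ihx
    obtain ⟨c, d, rfl⟩ := ihy
    exact ⟨a + c, b + d, by push_cast; ring⟩
  | mul x y _ _ ihx ihy =>
    obtain ⟨a, b, rfl⟩ := ihx
    obtain ⟨c, d, rfl⟩ := ihy
    exact ⟨a * c - b * d, a * d + b * c - b * d, by push_cast; linear_combination (b * d : A) * hζ⟩

theorem exists_four_mul_eq_sq_add_twentySeven_mul_sq {ζ z J : ℂ} {q : ℕ}
    (hζ : IsPrimitiveRoot ζ 3) (hz : z ∈ Algebra.adjoin ℤ {ζ}) (hJ : J = -1 + z * (ζ - 1) ^ 2)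
    (hnorm : J * conj J = q) :
    ∃ x y : ℤ, 4 * (q : ℤ) = x ^ 2 + 27 * y ^ 2 ∧ x % 3 = 1 ∧ J + conj J = x := by
  have hsum : ζ ^ 2 + ζ + 1 = 0 := by
    have h := hζ.geom_sum_eq_zero (by norm_num)
    simp only [sum_range_succ, sum_range_zero] at h
    linear_combination h
  have hconj : conj ζ = -1 - ζ := by
    rw [← inv_eq_conj (norm_eq_one_of_pow_eq_one hζ.pow_eq_one three_ne_zero)]
    exact inv_eq_of_mul_eq_one_right (by linear_combination -hsum)
  obtain ⟨c, d, rfl⟩ := exists_int_add_int_mul_of_mem_adjoin hsum hz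
  set a : ℤ := 3 * d - 1 with ha
  set b : ℤ := 3 * (d - c) with hb
  have hJab : J = a + b * ζ := by
    rw [hJ, ha, hb]
    push_cast
    linear_combination (c + d * ζ - 3 * d : ℂ) * hsum
  have hJconj : conj J = a - b - b * ζ := by
    rw [hJab, map_add, map_mul, map_intCast, map_intCast, hconj]
    ring
  have hq : (q : ℤ) = a ^ 2 - a * b + b ^ 2 := by
    have hqC : (q : ℂ) = ((a ^ 2 - a * b + b ^ 2 : ℤ) : ℂ) := by
      rw [← hnorm, hJconj, hJab]
      push_cast
      linear_combination (-(b : ℂ) ^ 2) * hsum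
    exact_mod_cast hqC
  refine ⟨2 * a - b, d - c, by rw [hq, hb]; ring, by omega, ?_⟩
  rw [hJconj, hJab]
  push_cast
  ring

lemma jacobiSum_inv_inv_eq_conj {R : Type*} [CommRing R] [Fintype R] (χ : MulChar R ℂ) :
    jacobiSum χ⁻¹ χ⁻¹ = conj (jacobiSum χ χ) := by
  rw [← MulChar.star_eq_inv]
  exact jacobiSum_ringHomComp χ χ (starRingEnd ℂ)

section Cubic

variable {F : Type*} [Field F] [Fintype F] {χ : MulChar F ℂ}

lemma jacobiSum_mul_conj_of_orderOf_eq_three (hχ : orderOf χ = 3) :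
    jacobiSum χ χ * conj (jacobiSum χ χ) = Fintype.card F := by
  rw [← jacobiSum_inv_inv_eq_conj]
  have hχ1 : χ ≠ 1 := by rintro rfl; simp at hχ
  have hχ2 : χ * χ ≠ 1 := by
    simpa [sq] using pow_ne_one_of_lt_orderOf two_ne_zero (hχ ▸ by norm_num)
  have hchar : ringChar ℂ ≠ ringChar F := by
    simpa only [ringChar.eq_zero] using (CharP.ringChar_ne_zero_of_finite F).symm
  exact jacobiSum_mul_jacobiSum_inv hchar hχ1 hχ1 hχ2

theorem nine_mul_ncard_cubes_eq (hχ : orderOf χ = 3) :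
    (9 * {z : F | (z ≠ 0 ∧ ∃ w, z = w ^ 3) ∧ (z + 1 ≠ 0 ∧ ∃ w, z + 1 = w ^ 3)}.ncard : ℂ) =
      Fintype.card F - 8 + (jacobiSum χ χ + conj (jacobiSum χ χ)) := by
  have hχ3 : χ ^ 3 = 1 := hχ ▸ pow_orderOf_eq_one χ
  have hχ1 : χ ≠ 1 := by rintro rfl; simp at hχ
  have hχ2 : χ ^ 2 = χ⁻¹ := eq_inv_of_mul_eq_one_left (by rw [← pow_succ, hχ3])
  have hneg : χ (-1) = 1 := MulChar.val_neg_one_eq_one_of_odd_order (by decide) hχ3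
  have h := orderOf_sq_mul_ncard_eq_sum_jacobiSum χ hneg
  simp only [hχ, sum_range_succ, sum_range_zero, pow_zero, pow_one, hχ2, zero_add] at h
  rw [jacobiSum_comm χ 1, jacobiSum_comm χ⁻¹ 1, jacobiSum_comm χ⁻¹ χ, jacobiSum_one_one,
    jacobiSum_one_nontrivial hχ1, jacobiSum_one_nontrivial (inv_ne_one.mpr hχ1),
    jacobiSum_nontrivial_inv hχ1, hneg, jacobiSum_inv_inv_eq_conj] at h
  push_cast at h
  linear_combination h

end Cubic

theorem stmt5 (p : ℕ) (hp : p.Prime) (hmod : p % 3 = 1) :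
    ∃ x y : ℤ, 4 * (p : ℤ) = x ^ 2 + 27 * y ^ 2 ∧ x % 3 = 1 ∧
      9 * ({z : ZMod p | z ∈ nonzeroCubes p ∧ z + 1 ∈ nonzeroCubes p}.ncard : ℤ)
        = (p : ℤ) - 8 + x := by
  have : Fact p.Prime := ⟨hp⟩
  have hζ : IsPrimitiveRoot (exp (2 * Real.pi * I / 3)) 3 := isPrimitiveRoot_exp 3 three_ne_zero
  have hdvd : 3 ∣ Fintype.card (ZMod p) - 1 := by rw [ZMod.card]; omega
  obtain ⟨χ, hχ⟩ := MulChar.exists_mulChar_orderOf (ZMod p) hdvd hζ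
  have hχ3 : χ ^ 3 = 1 := hχ ▸ pow_orderOf_eq_one χ
  obtain ⟨z, hz, hJ⟩ := exists_jacobiSum_eq_neg_one_add (by norm_num) hχ3 hχ3 hdvd hζ
  have hnorm := jacobiSum_mul_conj_of_orderOf_eq_three hχ
  rw [ZMod.card] at hnorm
  obtain ⟨x, y, hxy, hx, htrace⟩ := exists_four_mul_eq_sq_add_twentySeven_mul_sq hζ hz hJ hnorm
  refine ⟨x, y, hxy, hx, ?_⟩
  have hcount := nine_mul_ncard_cubes_eq (F := ZMod p) hχ
  rw [htrace, ZMod.card] at hcount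
  exact_mod_cast hcount
end

section
/- Let p be a prime and suppose that integers x₁, y₁, x₂, y₂ satisfy 4p = x₁² + 27y₁² and 4p = x₂² + 27y₂². Then x₁² = x₂² and y₁² = y₂²; that is, in a representation 4p = x² + 27y² the integers x² and y² are uniquely determined by p. -/
/-!
Compose two representations: `(x₁² + d y₁²)(x₂² + d y₂²) = (x₁x₂ + d y₁y₂)² + d (x₁y₂ - x₂y₁)²`,
and the same with `y₂ ↦ -y₂`. For `kp = x² + d y²` the left side is `k²p²`, and modulo `p` one of
`x₁x₂ ± d y₁y₂` vanishes; after choosing the sign of `y₂`, both squares on the right are divisible by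
`p²` (using `p ∤ d`). Dividing by `p²` gives `k² = A² + d C²`, so `C = 0` as soon as `k² < d`: the
two representations are proportional, hence `y₁² = y₂²`. For `4p = x² + 27y²` we have `k² = 16 < 27`,
and `p = 3` has no representation at all (look modulo `9`).
-/

section TwoRepresentations

variable {p d k x₁ y₁ x₂ y₂ : ℤ}

lemma dvd_mul_of_eq_sq_add_mul_sq (h1 : k * p = x₁ ^ 2 + d * y₁ ^ 2)
    (h2 : k * p = x₂ ^ 2 + d * y₂ ^ 2) :
    p ∣ (x₁ * x₂ + d * y₁ * y₂) * (x₁ * x₂ - d * y₁ * y₂) :=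
  ⟨k * k * p - k * d * y₁ ^ 2 - k * d * y₂ ^ 2, by
    linear_combination (-x₂ ^ 2) * h1 + (d * y₁ ^ 2 - k * p) * h2⟩

lemma sq_eq_sq_of_dvd_mul_add_mul (hp : Prime p) (hpd : ¬ p ∣ d) (hk0 : k ≠ 0) (hkd : k ^ 2 < d)
    (h1 : k * p = x₁ ^ 2 + d * y₁ ^ 2) (h2 : k * p = x₂ ^ 2 + d * y₂ ^ 2)
    (hdvd : p ∣ x₁ * x₂ + d * y₁ * y₂) :
    y₁ ^ 2 = y₂ ^ 2 := by
  obtain ⟨A, hA⟩ := hdvd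
  set B := x₁ * y₂ - x₂ * y₁ with hB
  have hdB : d * B ^ 2 = p ^ 2 * (k ^ 2 - A ^ 2) := by
    rw [hB]
    linear_combination (-(x₂ ^ 2 + d * y₂ ^ 2)) * h1 - k * p * h2
      - (x₁ * x₂ + d * y₁ * y₂ + p * A) * hA
  obtain ⟨C, hC⟩ : p ∣ B := by
    refine hp.dvd_of_dvd_pow (n := 2) ((hp.dvd_mul.mp ⟨p * (k ^ 2 - A ^ 2), ?_⟩).resolve_left hpd)
    linear_combination hdB
  have hdC : d * C ^ 2 = k ^ 2 - A ^ 2 := by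
    refine mul_left_cancel₀ (pow_ne_zero 2 hp.ne_zero) ?_
    linear_combination hdB + (-d * (B + p * C)) * hC
  have hC0 : C = 0 := by
    by_contra hC0
    have : 0 < C ^ 2 := by positivity
    nlinarith [sq_nonneg A, sq_nonneg k]
  have hB0 : x₁ * y₂ - x₂ * y₁ = 0 := by rw [← hB, hC, hC0, mul_zero]
  have hprop : k * p * (y₂ ^ 2 - y₁ ^ 2) = 0 := by
    linear_combination y₂ ^ 2 * h1 - y₁ ^ 2 * h2 + (x₁ * y₂ + x₂ * y₁) * hB0
  have := (mul_eq_zero.mp hprop).resolve_left (mul_ne_zero hk0 hp.ne_zero)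
  linarith

lemma sq_eq_sq_of_eq_sq_add_mul_sq (hp : Prime p) (hpd : ¬ p ∣ d) (hk0 : k ≠ 0)
    (hkd : k ^ 2 < d) (h1 : k * p = x₁ ^ 2 + d * y₁ ^ 2) (h2 : k * p = x₂ ^ 2 + d * y₂ ^ 2) :
    y₁ ^ 2 = y₂ ^ 2 := by
  rcases hp.dvd_mul.mp (dvd_mul_of_eq_sq_add_mul_sq h1 h2) with hdvd | hdvd
  · exact sq_eq_sq_of_dvd_mul_add_mul hp hpd hk0 hkd h1 h2 hdvd
  · have := sq_eq_sq_of_dvd_mul_add_mul (x₂ := x₂) (y₂ := -y₂) hp hpd hk0 hkd h1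
      (by rwa [neg_sq]) (by rwa [mul_neg, ← sub_eq_add_neg])
    rwa [neg_sq] at this

end TwoRepresentations

lemma sq_add_27_mul_sq_ne_12 (x y : ℤ) : x ^ 2 + 27 * y ^ 2 ≠ 12 := by
  intro h
  have h9 := congrArg (fun n : ℤ => (n : ZMod 9)) h
  push_cast at h9
  revert h9
  generalize (x : ZMod 9) = a
  generalize (y : ZMod 9) = b
  revert a b
  decide

theorem stmt6 (p : ℕ) (hp : p.Prime) (x₁ y₁ x₂ y₂ : ℤ)
    (h1 : 4 * (p : ℤ) = x₁ ^ 2 + 27 * y₁ ^ 2)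
    (h2 : 4 * (p : ℤ) = x₂ ^ 2 + 27 * y₂ ^ 2) :
    x₁ ^ 2 = x₂ ^ 2 ∧ y₁ ^ 2 = y₂ ^ 2 := by
  have hp27 : ¬ (p : ℤ) ∣ 27 := by
    intro h
    have hp3 : p = 3 := (Nat.prime_dvd_prime_iff_eq hp Nat.prime_three).mp
      (hp.dvd_of_dvd_pow (n := 3) (by exact_mod_cast h))
    subst hp3
    exact sq_add_27_mul_sq_ne_12 x₁ y₁ (by linear_combination -h1)
  have hy := sq_eq_sq_of_eq_sq_add_mul_sq (Nat.prime_iff_prime_int.mp hp) hp27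
    (by norm_num) (by norm_num) h1 h2
  exact ⟨by linarith, hy⟩
end

section
/- Let p be a prime with p ≡ 1 (mod 3) such that (p−1)/3 is even. Then the generalized Paley graph GPaley(p,(p−1)/3) is not strongly regular; in fact there exist two pairs of distinct non-adjacent vertices having different numbers of common neighbors. -/
/-!
Let `χ` be a complex character of order 3 on `𝔽_p`. Its kernel is the set of nonzero cubes, so
`1 + χ + χ²` is three times their indicator, and expanding the number `N(d)` of `x` with `x` and
`x - d` both nonzero cubes into Jacobi sums gives, for a non-cube `d`,
`9 N(d) = p - 2 + χ(d)² J + χ(d) J'` with `J = J(χ, χ)` and `J' = J(χ⁻¹, χ⁻¹)`.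
For a non-cube `d`, `d²` is a non-cube too and `χ(d²) = χ(d)²`, so `N(d) = N(d²)` would force
`J = J'`. But `J J' = p` and `J ∈ ℤ[ω]`, while no `a + bω` squares to a prime. As `N(d)` counts
the common neighbours of the non-adjacent vertices `0` and `d`, the graph is not strongly regular.
-/

/-- The generalized Paley graph `GPaley(p, (p-1)/3)` on `ZMod p`: distinct `x` and `y`
are adjacent iff `x - y` is a nonzero cube. (Both directions are required so that the
graph is well defined for every `p`; when `(p-1)/3` is even they are equivalent.) -/
def gpaleyThird (p : ℕ) : SimpleGraph (ZMod p) where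
  Adj x y := x ≠ y ∧ (∃ w : ZMod p, w ≠ 0 ∧ x - y = w ^ 3) ∧
    (∃ w : ZMod p, w ≠ 0 ∧ y - x = w ^ 3)
  symm := ⟨by rintro x y ⟨h1, h2, h3⟩; exact ⟨h1.symm, h3, h2⟩⟩
  loopless := ⟨by rintro x ⟨h1, -⟩; exact h1 rfl⟩

/-- `Γ` is strongly regular: there are constants `lam` and `mu` such that every two
adjacent vertices have exactly `lam` common neighbors and every two distinct
non-adjacent vertices have exactly `mu` common neighbors. -/
def IsSRG {V : Type} (Γ : SimpleGraph V) : Prop :=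
  ∃ lam mu : ℕ,
    (∀ u v : V, Γ.Adj u v → (Γ.commonNeighbors u v).ncard = lam) ∧
    (∀ u v : V, u ≠ v → ¬ Γ.Adj u v → (Γ.commonNeighbors u v).ncard = mu)

open Finset

def IsPowerResidue {M : Type*} [MonoidWithZero M] (n : ℕ) (z : M) : Prop :=
  ∃ w : M, w ≠ 0 ∧ z = w ^ n

noncomputable def residuePairCount {R : Type*} [Ring R] (n : ℕ) (d : R) : ℕ :=
  {x : R | IsPowerResidue n x ∧ IsPowerResidue n (x - d)}.ncard

lemma IsPowerResidue.ne_zero {M : Type*} [MonoidWithZero M] [NoZeroDivisors M] {n : ℕ} {z : M}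
    (h : IsPowerResidue n z) : z ≠ 0 := by
  obtain ⟨w, hw, rfl⟩ := h
  exact pow_ne_zero n hw

lemma IsPowerResidue.neg {R : Type*} [Ring R] {n : ℕ} (hn : Odd n) {z : R}
    (h : IsPowerResidue n z) : IsPowerResidue n (-z) := by
  obtain ⟨w, hw, rfl⟩ := h
  exact ⟨-w, neg_ne_zero.mpr hw, (hn.neg_pow w).symm⟩

lemma sq_add_self_add_one_eq_zero {R : Type*} [CommRing R] [NoZeroDivisors R] {c : R}
    (h3 : c ^ 3 = 1) (h1 : c ≠ 1) : c ^ 2 + c + 1 = 0 := by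
  have hfac : (c - 1) * (c ^ 2 + c + 1) = 0 := by linear_combination h3
  exact (mul_eq_zero.mp hfac).resolve_left (sub_ne_zero.mpr h1)

namespace MulChar

variable {F R : Type*} [Field F] [CommRing R]

lemma pow_apply_of_ne_zero (χ : MulChar F R) (k : ℕ) {z : F} (hz : z ≠ 0) :
    (χ ^ k) z = χ z ^ k :=
  χ.pow_apply_coe k hz.isUnit.unit

lemma apply_eq_one_iff_isPowerResidue [Finite F] {χ : MulChar F R} {z : F} (hz : z ≠ 0) :
    χ z = 1 ↔ IsPowerResidue (orderOf χ) z := by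
  constructor
  · intro h
    obtain ⟨g, hg⟩ := IsCyclic.exists_generator (α := Fˣ)
    obtain ⟨m, hm : g ^ m = hz.isUnit.unit⟩ := mem_powers_iff_mem_zpowers.mpr (hg _)
    have horder : orderOf χ = orderOf (χ g) := orderOf_eq_orderOf_iff.mpr fun k ↦ by
      rw [eq_iff hg, pow_apply_coe, one_apply_coe]
    have hgz : ((g ^ m : Fˣ) : F) = z := by rw [hm, IsUnit.unit_spec]
    have hgm : χ g ^ m = 1 := by rw [← map_pow, ← Units.val_pow_eq_pow_val, hgz, h]
    obtain ⟨k, rfl⟩ := horder ▸ orderOf_dvd_of_pow_eq_one hgm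
    refine ⟨(g ^ k : Fˣ), Units.ne_zero _, ?_⟩
    rw [← hgz, ← Units.val_pow_eq_pow_val, ← pow_mul, mul_comm]
  · rintro ⟨w, hw, rfl⟩
    rw [map_pow, ← pow_apply_of_ne_zero χ _ hw, pow_orderOf_eq_one, one_apply hw.isUnit]

lemma apply_pow_orderOf_eq_one [Finite F] (χ : MulChar F R) {z : F} (hz : z ≠ 0) :
    χ z ^ orderOf χ = 1 := by
  rw [← pow_apply_of_ne_zero χ _ hz, pow_orderOf_eq_one, one_apply hz.isUnit]

open Classical in
lemma sum_pow_apply_eq_ite [Finite F] [IsDomain R] (χ : MulChar F R) (z : F) :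
    ∑ k ∈ range (orderOf χ), (χ ^ k) z =
      if IsPowerResidue (orderOf χ) z then (orderOf χ : R) else 0 := by
  by_cases hz : z = 0
  · subst hz
    -- `χ ^ 0` is the trivial character, which also vanishes at `0`
    rw [if_neg fun h ↦ h.ne_zero rfl]
    exact sum_eq_zero fun k _ ↦ (χ ^ k).map_zero
  simp_rw [pow_apply_of_ne_zero χ _ hz, ← apply_eq_one_iff_isPowerResidue hz]
  split_ifs with h
  · simp [h]
  · have hgeom := geom_sum_mul (χ z) (orderOf χ)
    rw [apply_pow_orderOf_eq_one χ hz, sub_self] at hgeom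
    exact (mul_eq_zero.mp hgeom).resolve_right (sub_ne_zero.mpr h)

lemma sum_mul_apply_sub_eq_jacobiSum [Fintype F] (ψ ψ' : MulChar F R) {d : F} (hd : d ≠ 0) :
    ∑ x, ψ x * ψ' (x - d) = ψ' (-1) * (ψ * ψ') d * jacobiSum ψ ψ' := by
  rw [jacobiSum, mul_sum, ← Fintype.sum_bijective _ (mulLeft_bijective₀ d hd)
    (fun t ↦ ψ (d * t) * ψ' (d * t - d)) _ fun _ ↦ rfl]
  refine sum_congr rfl fun t _ ↦ ?_
  rw [show d * t - d = -1 * d * (1 - t) by ring, map_mul, map_mul, map_mul,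
    coeToFun_mul, Pi.mul_apply]
  ring

lemma orderOf_sq_mul_residuePairCount [Fintype F] [IsDomain R] (χ : MulChar F R) {d : F}
    (hd : d ≠ 0) :
    (orderOf χ ^ 2 : R) * residuePairCount (orderOf χ) d =
      ∑ a ∈ range (orderOf χ), ∑ b ∈ range (orderOf χ),
        χ (-1) ^ b * χ d ^ (a + b) * jacobiSum (χ ^ a) (χ ^ b) := by
  classical
  calc (orderOf χ ^ 2 : R) * residuePairCount (orderOf χ) d
      = ∑ x, (∑ a ∈ range (orderOf χ), (χ ^ a) x) * ∑ b ∈ range (orderOf χ), (χ ^ b) (x - d) := by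
        simp_rw [sum_pow_apply_eq_ite, ite_zero_mul_ite_zero, sum_ite, sum_const_zero, add_zero,
          sum_const, nsmul_eq_mul, residuePairCount, Set.ncard_eq_toFinset_card',
          Set.toFinset_ofPred]
        ring
    _ = ∑ a ∈ range (orderOf χ), ∑ b ∈ range (orderOf χ), ∑ x, (χ ^ a) x * (χ ^ b) (x - d) := by
        simp_rw [sum_mul_sum]
        rw [sum_comm]
        exact sum_congr rfl fun a _ ↦ sum_comm
    _ = _ := by
        refine sum_congr rfl fun a _ ↦ sum_congr rfl fun b _ ↦ ?_
        rw [sum_mul_apply_sub_eq_jacobiSum _ _ hd, ← pow_add,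
          pow_apply_of_ne_zero _ _ (neg_ne_zero.mpr one_ne_zero), pow_apply_of_ne_zero _ _ hd]


lemma nine_mul_residuePairCount [Fintype F] [IsDomain R] {χ : MulChar F R} (hχ : orderOf χ = 3)
    {d : F} (hd0 : d ≠ 0) (hd : ¬ IsPowerResidue 3 d) :
    9 * (residuePairCount 3 d : R) =
      Fintype.card F - 2 + χ d ^ 2 * jacobiSum χ χ + χ d * jacobiSum χ⁻¹ χ⁻¹ := by
  have h := orderOf_sq_mul_residuePairCount χ hd0
  have hχ1 : χ ≠ 1 := by rintro rfl; simp at hχ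
  have hχ1' : χ⁻¹ ≠ 1 := inv_ne_one.mpr hχ1
  have hχ3 : χ ^ 3 = 1 := hχ ▸ pow_orderOf_eq_one χ
  have hinv : χ ^ 2 = χ⁻¹ := eq_inv_of_mul_eq_one_left (by rw [← pow_succ]; exact hχ3)
  have hneg : χ (-1) = 1 := (apply_eq_one_iff_isPowerResidue (neg_ne_zero.mpr one_ne_zero)).mpr
    (hχ ▸ ⟨-1, neg_ne_zero.mpr one_ne_zero, by norm_num⟩)
  have hc3 : χ d ^ 3 = 1 := hχ ▸ apply_pow_orderOf_eq_one χ hd0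
  have hc : χ d ^ 2 + χ d + 1 = 0 :=
    sq_add_self_add_one_eq_zero hc3 (mt (apply_eq_one_iff_isPowerResidue hd0).mp (hχ ▸ hd))
  simp only [hχ, sum_range_succ, range_zero, sum_empty, pow_zero, pow_one, hinv, hneg, one_pow,
    zero_add, one_mul] at h
  rw [jacobiSum_one_one, jacobiSum_comm χ 1, jacobiSum_comm χ⁻¹ 1, jacobiSum_one_nontrivial hχ1,
    jacobiSum_one_nontrivial hχ1', jacobiSum_comm χ⁻¹ χ, jacobiSum_nontrivial_inv hχ1, hneg] at h
  linear_combination h - 2 * χ d * hc + χ d * jacobiSum χ⁻¹ χ⁻¹ * hc3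

lemma jacobiSum_eq_of_residuePairCount_eq [Fintype F] [IsDomain R] {χ : MulChar F R}
    (hχ : orderOf χ = 3) {d : F} (hd0 : d ≠ 0) (hd : ¬ IsPowerResidue 3 d)
    (hd2 : ¬ IsPowerResidue 3 (d ^ 2)) (h : residuePairCount 3 d = residuePairCount 3 (d ^ 2)) :
    jacobiSum χ χ = jacobiSum χ⁻¹ χ⁻¹ := by
  have h₁ := nine_mul_residuePairCount hχ hd0 hd
  have h₂ := nine_mul_residuePairCount (R := R) hχ (pow_ne_zero 2 hd0) hd2
  rw [map_pow] at h₂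
  have hc3 : χ d ^ 3 = 1 := hχ ▸ apply_pow_orderOf_eq_one χ hd0
  have hc1 : χ d ≠ 1 := mt (apply_eq_one_iff_isPowerResidue hd0).mp (hχ ▸ hd)
  have hfac : (χ d ^ 2 - χ d) * (jacobiSum χ χ - jacobiSum χ⁻¹ χ⁻¹) = 0 := by
    linear_combination h₂ - h₁ + congrArg (fun n : ℕ ↦ 9 * (n : R)) h +
      χ d * jacobiSum χ χ * hc3
  have hc : χ d ^ 2 - χ d ≠ 0 := fun h ↦ hc1 (by linear_combination hc3 - (χ d + 1) * h)
  exact sub_eq_zero.mp ((mul_eq_zero.mp hfac).resolve_left hc)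

end MulChar

section EisensteinIntegers

lemma exists_eq_intCast_add_intCast_mul {A : Type*} [CommRing A] {ω : A} (hω : ω ^ 2 + ω + 1 = 0)
    {x : A} (hx : x ∈ Algebra.adjoin ℤ {ω}) : ∃ a b : ℤ, x = a + b * ω := by
  induction hx using Algebra.adjoin_induction with
  | mem x hx =>
    rw [Set.mem_singleton_iff.mp hx]
    exact ⟨0, 1, by push_cast; ring⟩
  | algebraMap r => exact ⟨r, 0, by simp⟩
  | add x y _ _ ihx ihy =>
    obtain ⟨a, b, rfl⟩ := ihx
    obtain ⟨c, e, rfl⟩ := ihy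
    exact ⟨a + c, b + e, by push_cast; ring⟩
  | mul x y _ _ ihx ihy =>
    obtain ⟨a, b, rfl⟩ := ihx
    obtain ⟨c, e, rfl⟩ := ihy
    exact ⟨a * c - b * e, a * e + b * c - b * e, by push_cast; linear_combination b * e * hω⟩

variable {K : Type*} [Field K] [CharZero K] {ω : K}

lemma eq_zero_of_intCast_add_intCast_mul_eq_intCast (hω : ω ^ 2 + ω + 1 = 0) {a b n : ℤ}
    (h : (a : K) + b * ω = n) : b = 0 := by
  by_contra hb
  have hωq : ω = ((n - a) / b : ℚ) := by
    push_cast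
    rw [eq_div_iff (Int.cast_ne_zero.mpr hb)]
    linear_combination h
  rw [hωq] at hω
  have hq : (((n - a) / b : ℚ) ^ 2 + (n - a) / b + 1 : ℚ) = 0 := by exact_mod_cast hω
  nlinarith [sq_nonneg (2 * ((n - a) / b : ℚ) + 1)]

lemma sq_ne_natCast_of_mem_adjoin (hω : ω ^ 2 + ω + 1 = 0) {x : K}
    (hx : x ∈ Algebra.adjoin ℤ {ω}) {q : ℕ} (hq : ¬ IsSquare (q : ℤ)) : x ^ 2 ≠ q := by
  obtain ⟨a, b, rfl⟩ := exists_eq_intCast_add_intCast_mul hω hx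
  intro h
  have hsq : ((a ^ 2 - b ^ 2 : ℤ) : K) + ((2 * a * b - b ^ 2 : ℤ) : K) * ω = ((q : ℤ) : K) := by
    push_cast
    linear_combination h - (b : K) ^ 2 * hω
  have him := eq_zero_of_intCast_add_intCast_mul_eq_intCast hω hsq
  rw [him, Int.cast_zero, zero_mul, add_zero, Int.cast_inj] at hsq
  have hb : b * (2 * a - b) = 0 := by linear_combination him
  rcases mul_eq_zero.mp hb with hb | hb
  · exact hq ⟨a, by rw [← hsq, hb]; ring⟩
  · have hq0 : (q : ℤ) = 0 := by nlinarith [sq_nonneg a]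
    exact hq ⟨0, by rw [hq0]; ring⟩

end EisensteinIntegers

theorem exists_residuePairCount_ne {F : Type*} [Field F] [Fintype F]
    (h3 : 3 ∣ Fintype.card F - 1) (hq : ¬ IsSquare (Fintype.card F : ℤ)) :
    ∃ d₁ d₂ : F, d₁ ≠ 0 ∧ d₂ ≠ 0 ∧ ¬ IsPowerResidue 3 d₁ ∧ ¬ IsPowerResidue 3 d₂ ∧
      residuePairCount 3 d₁ ≠ residuePairCount 3 d₂ := by
  obtain ⟨ω, hω⟩ : ∃ ω : ℂ, IsPrimitiveRoot ω 3 := ⟨_, Complex.isPrimitiveRoot_exp 3 (by norm_num)⟩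
  obtain ⟨χ, hχ⟩ := MulChar.exists_mulChar_orderOf F h3 hω
  have hχ1 : χ ≠ 1 := by rintro rfl; simp at hχ
  obtain ⟨u, hu⟩ := MulChar.ne_one_iff.mp hχ1
  have hu0 : (u : F) ≠ 0 := u.ne_zero
  have hu2 : χ (u ^ 2 : F) ≠ 1 := by
    have hc3 : χ u ^ 3 = 1 := hχ ▸ MulChar.apply_pow_orderOf_eq_one χ hu0
    rw [map_pow]
    exact fun h ↦ hu (by linear_combination hc3 - χ u * h)
  have hnonres {z : F} (hz : z ≠ 0) (h : χ z ≠ 1) : ¬ IsPowerResidue 3 z :=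
    hχ ▸ mt (MulChar.apply_eq_one_iff_isPowerResidue hz).mpr h
  refine ⟨u, u ^ 2, hu0, pow_ne_zero 2 hu0, hnonres hu0 hu, hnonres (pow_ne_zero 2 hu0) hu2,
    fun h ↦ ?_⟩
  have hJ := MulChar.jacobiSum_eq_of_residuePairCount_eq hχ hu0 (hnonres hu0 hu)
    (hnonres (pow_ne_zero 2 hu0) hu2) h
  have hprod : jacobiSum χ χ * jacobiSum χ⁻¹ χ⁻¹ = Fintype.card F :=
    jacobiSum_mul_jacobiSum_inv (by simpa only [ringChar.eq_zero] using
      (CharP.ringChar_ne_zero_of_finite F).symm) hχ1 hχ1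
      (by rw [← sq]; exact pow_ne_one_of_lt_orderOf two_ne_zero (by omega))
  have hmem : jacobiSum χ χ ∈ Algebra.adjoin ℤ {ω} :=
    jacobiSum_mem_algebraAdjoin_of_pow_eq_one (hχ ▸ pow_orderOf_eq_one χ)
      (hχ ▸ pow_orderOf_eq_one χ) hω
  exact sq_ne_natCast_of_mem_adjoin (sq_add_self_add_one_eq_zero hω.pow_eq_one
    (hω.ne_one (by norm_num))) hmem hq (by rw [sq, ← hprod, hJ])

section GPaley

variable {p : ℕ} [Fact p.Prime]

lemma gpaleyThird_adj_iff {x y : ZMod p} :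
    (gpaleyThird p).Adj x y ↔ IsPowerResidue 3 (y - x) := by
  refine ⟨fun h ↦ h.2.2, fun h ↦ ⟨(sub_ne_zero.mp h.ne_zero).symm, ?_, h⟩⟩
  rw [← neg_sub]
  exact h.neg (by decide)

lemma ncard_gpaleyThird_commonNeighbors_zero (d : ZMod p) :
    ((gpaleyThird p).commonNeighbors 0 d).ncard = residuePairCount 3 d := by
  congr 1
  ext x
  simp only [SimpleGraph.mem_commonNeighbors, gpaleyThird_adj_iff, sub_zero, Set.mem_ofPred_eq]

end GPaley

theorem stmt9_general (p : ℕ) (hp : p.Prime) (hmod : p % 3 = 1) :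
    ¬ IsSRG (gpaleyThird p) ∧
    ∃ u v u' v' : ZMod p, u ≠ v ∧ ¬ (gpaleyThird p).Adj u v ∧
      u' ≠ v' ∧ ¬ (gpaleyThird p).Adj u' v' ∧
      ((gpaleyThird p).commonNeighbors u v).ncard
        ≠ ((gpaleyThird p).commonNeighbors u' v').ncard := by
  have := Fact.mk hp
  obtain ⟨d₁, d₂, hd₁, hd₂, hn₁, hn₂, hne⟩ := exists_residuePairCount_ne (F := ZMod p)
    (by rw [ZMod.card]; omega)
    (by rw [ZMod.card]; exact (Nat.prime_iff_prime_int.mp hp).not_isSquare)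
  have hnadj {d : ZMod p} (hd : ¬ IsPowerResidue 3 d) : ¬ (gpaleyThird p).Adj 0 d := by
    rwa [gpaleyThird_adj_iff, sub_zero]
  rw [← ncard_gpaleyThird_commonNeighbors_zero, ← ncard_gpaleyThird_commonNeighbors_zero] at hne
  refine ⟨fun ⟨_, μ, _, hμ⟩ ↦ hne ?_, 0, d₁, 0, d₂, hd₁.symm, hnadj hn₁, hd₂.symm, hnadj hn₂, hne⟩
  exact (hμ 0 d₁ hd₁.symm (hnadj hn₁)).trans (hμ 0 d₂ hd₂.symm (hnadj hn₂)).symm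

theorem stmt9 (p : ℕ) (hp : p.Prime) (hmod : p % 3 = 1) (heven : Even ((p - 1) / 3)) :
    ¬ IsSRG (gpaleyThird p) ∧
    ∃ u v u' v' : ZMod p, u ≠ v ∧ ¬ (gpaleyThird p).Adj u v ∧
      u' ≠ v' ∧ ¬ (gpaleyThird p).Adj u' v' ∧
      ((gpaleyThird p).commonNeighbors u v).ncard
        ≠ ((gpaleyThird p).commonNeighbors u' v').ncard :=
  stmt9_general p hp hmod
end

section
/- Let m > 1 be an odd integer and let Γ be the complement of the tensor product K₄ × K_m, i.e., the graph with vertex set {0,1,2,3} × {0,…,m−1} in which distinct vertices (i,a) and (j,b) are adjacent if and only if i = j or a = b. Then Γ is a Deza graph with parameters (4m, m+2, m−2, 2). -/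
/-- The complement of `K₄ × K_m`: distinct `(i,a)` and `(j,b)` are adjacent
iff `i = j` or `a = b`. -/
def gammaTen (m : ℕ) : SimpleGraph (Fin 4 × Fin m) where
  Adj v u := v ≠ u ∧ (v.1 = u.1 ∨ v.2 = u.2)
  symm := by constructor; rintro v u ⟨h1, h2⟩; exact ⟨h1.symm, h2.imp Eq.symm Eq.symm⟩
  loopless := by constructor; rintro v ⟨h1, -⟩; exact h1 rfl

/-- `Γ` is a Deza graph with parameters `(n, k, b, a)`: it has `n` vertices, is
`k`-regular, and any pair of distinct vertices has either `a` or `b` common neighbors. -/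
def IsDezaGraph {V : Type} (Γ : SimpleGraph V) (n k b a : ℕ) : Prop :=
  Nat.card V = n ∧ (∀ v, (Γ.neighborSet v).ncard = k) ∧
    ∀ u v : V, u ≠ v →
      (Γ.commonNeighbors u v).ncard = a ∨ (Γ.commonNeighbors u v).ncard = b

/-!
The complement of `K₄ × K_m` is the rook's graph `K₄ □ K_m`. Two vertices on a common line
(row or column) of a rook's graph share exactly the other vertices of that line, and two vertices
on no common line share exactly the two other corners of their rectangle. A column has `4`
vertices, so both "column" pairs and "rectangle" pairs have `2` common neighbours, while "row"
pairs have `m - 2`.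
-/

namespace SimpleGraph

variable {α β : Type*}

section BoxProd

variable {G : SimpleGraph α} {H : SimpleGraph β}

theorem commonNeighbors_boxProd_of_fst_eq (a : α) {b b' : β} (hb : b ≠ b') :
    (G □ H).commonNeighbors (a, b) (a, b') = {a} ×ˢ H.commonNeighbors b b' := by
  ext ⟨x, y⟩
  simp only [mem_commonNeighbors, boxProd_adj, Set.mem_prod, Set.mem_singleton_iff]
  grind [G.irrefl]

theorem commonNeighbors_boxProd_of_snd_eq {a a' : α} (ha : a ≠ a') (b : β) :
    (G □ H).commonNeighbors (a, b) (a', b) = G.commonNeighbors a a' ×ˢ {b} := by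
  ext ⟨x, y⟩
  simp only [mem_commonNeighbors, boxProd_adj, Set.mem_prod, Set.mem_singleton_iff]
  grind [H.irrefl]

theorem ncard_neighborSet_boxProd [Finite α] [Finite β] (x : α × β) :
    ((G □ H).neighborSet x).ncard = (G.neighborSet x.1).ncard + (H.neighborSet x.2).ncard := by
  have hdisj : Disjoint (G.neighborSet x.1 ×ˢ {x.2}) ({x.1} ×ˢ H.neighborSet x.2) :=
    Set.disjoint_prod.mpr <| Or.inl <| Set.disjoint_singleton_right.mpr G.notMem_neighborSet_self
  rw [neighborSet_boxProd, Set.ncard_union_eq hdisj, Set.ncard_prod, Set.ncard_prod,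
    Set.ncard_singleton, Set.ncard_singleton, mul_one, one_mul]

end BoxProd

theorem commonNeighbors_top_boxProd_top {a a' : α} {b b' : β} (ha : a ≠ a') (hb : b ≠ b') :
    ((⊤ : SimpleGraph α) □ (⊤ : SimpleGraph β)).commonNeighbors (a, b) (a', b') =
      {(a, b'), (a', b)} := by
  ext ⟨x, y⟩
  simp only [mem_commonNeighbors, boxProd_adj, top_adj, Set.mem_insert_iff,
    Set.mem_singleton_iff, Prod.mk.injEq]
  grind

theorem ncard_neighborSet_top [Finite α] (a : α) :
    ((⊤ : SimpleGraph α).neighborSet a).ncard = Nat.card α - 1 := by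
  rw [neighborSet_top, Set.ncard_compl, Set.ncard_singleton]

theorem ncard_commonNeighbors_top [Finite α] {a a' : α} (ha : a ≠ a') :
    ((⊤ : SimpleGraph α).commonNeighbors a a').ncard = Nat.card α - 2 := by
  rw [commonNeighbors_top_eq, Set.ncard_sdiff (Set.subset_univ _), Set.ncard_univ,
    Set.ncard_pair ha]

end SimpleGraph

open SimpleGraph

theorem gammaTen_eq_top_boxProd_top (m : ℕ) :
    gammaTen m = (⊤ : SimpleGraph (Fin 4)) □ (⊤ : SimpleGraph (Fin m)) := by
  ext ⟨i, a⟩ ⟨j, b⟩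
  simp only [gammaTen, boxProd_adj, top_adj, ne_eq, Prod.mk.injEq]
  tauto

theorem stmt10_general (m : ℕ) :
    IsDezaGraph (gammaTen m) (4 * m) (m + 2) (m - 2) 2 := by
  rw [gammaTen_eq_top_boxProd_top]
  refine ⟨by simp, fun v => ?_, ?_⟩
  · rw [ncard_neighborSet_boxProd, ncard_neighborSet_top, ncard_neighborSet_top]
    have := v.2.pos
    simp only [Nat.card_eq_fintype_card, Fintype.card_fin]
    omega
  rintro ⟨i, a⟩ ⟨j, b⟩ hne
  obtain rfl | hij := eq_or_ne i j
  · right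
    have hab : a ≠ b := by rintro rfl; exact hne rfl
    rw [commonNeighbors_boxProd_of_fst_eq i hab, Set.ncard_prod, Set.ncard_singleton,
      ncard_commonNeighbors_top hab, Nat.card_fin, one_mul]
  left
  obtain rfl | hab := eq_or_ne a b
  · rw [commonNeighbors_boxProd_of_snd_eq hij, Set.ncard_prod, Set.ncard_singleton,
      ncard_commonNeighbors_top hij, Nat.card_fin, mul_one]
  · rw [commonNeighbors_top_boxProd_top hij hab, Set.ncard_pair (by simp [hij])]

theorem stmt10 (m : ℕ) (hm : 1 < m) (hodd : Odd m) :
    IsDezaGraph (gammaTen m) (4 * m) (m + 2) (m - 2) 2 :=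
  stmt10_general m
end

section
/- Let p be a prime with p ≡ 1 (mod 4) and let Γ = Paley(p)[K₂] be the graph with vertex set (ℤ/pℤ) × {0,1} in which (x,u) and (y,v) are adjacent if and only if x − y is a nonzero square in ℤ/pℤ, or x = y and u ≠ v. Then Γ is a Deza graph with parameters (2p, p, p−1, (p−1)/2). -/
/-- The graph `Paley(p)[K₂]` on `(ZMod p) × Fin 2`: `(x,u)` and `(y,v)` are adjacent
iff `x - y` is a nonzero square, or `x = y` and `u ≠ v`. (Both directions of the
square condition are required so that the graph is well defined for every `p`;
when `p ≡ 1 (mod 4)` they are equivalent.) -/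
def paleyK2 (p : ℕ) : SimpleGraph (ZMod p × Fin 2) where
  Adj v u := (v.1 ≠ u.1 ∧ (∃ w : ZMod p, w ≠ 0 ∧ v.1 - u.1 = w ^ 2) ∧
      (∃ w : ZMod p, w ≠ 0 ∧ u.1 - v.1 = w ^ 2)) ∨ (v.1 = u.1 ∧ v.2 ≠ u.2)
  symm := by
    constructor
    rintro v u (⟨h1, h2, h3⟩ | ⟨h1, h2⟩)
    · exact Or.inl ⟨h1.symm, h3, h2⟩
    · exact Or.inr ⟨h1.symm, h2.symm⟩
  loopless := by
    constructor
    rintro v (⟨h, -, -⟩ | ⟨-, h⟩) <;> exact h rfl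

/-!
For `q ≡ 1 (mod 4)` the Paley graph on `𝔽_q` is strongly regular with parameters
`(q, (q-1)/2, (q-5)/4, (q-1)/4)`. With `χ` the quadratic character, `1 + χ (x - z)` is twice the
indicator of `z ~ x` plus the indicator of `z = x`, so the number of common neighbours of `x ≠ y`
is read off from `∑ z, (1 + χ (x - z)) * (1 + χ (y - z)) = q - 1`: after an affine change of
variables the cross term is `χ(-1) J(χ, χ) = -χ(-1)² = -1`.

In the lexicographic product `G[K₂]` the two copies of a vertex `a` have the `2 k` common
neighbours `N(a) × K₂`, while vertices over distinct `a, b` have `2 |N(a) ∩ N(b)|` common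
neighbours, plus `(a, 1 - u)` and `(b, 1 - v)` when `a ~ b`. For a strongly regular graph
with `μ = λ + 1` both of the latter counts equal `2 μ`.
-/

namespace SimpleGraph

section Lex

variable {V W : Type*}

def lex (G : SimpleGraph V) (H : SimpleGraph W) : SimpleGraph (V × W) where
  Adj x y := G.Adj x.1 y.1 ∨ (x.1 = y.1 ∧ H.Adj x.2 y.2)
  symm := ⟨fun _ _ => Or.imp G.adj_symm fun h => ⟨h.1.symm, h.2.symm⟩⟩
  loopless := ⟨fun _ h => h.elim G.irrefl fun h => H.irrefl h.2⟩

variable {G : SimpleGraph V} {H : SimpleGraph W}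

@[simp]
lemma lex_adj {x y : V × W} :
    (G.lex H).Adj x y ↔ G.Adj x.1 y.1 ∨ (x.1 = y.1 ∧ H.Adj x.2 y.2) :=
  Iff.rfl

lemma neighborSet_lex (a : V) (u : W) :
    (G.lex H).neighborSet (a, u) = G.neighborSet a ×ˢ Set.univ ∪ {a} ×ˢ H.neighborSet u := by
  ext ⟨b, v⟩
  simp [eq_comm]

lemma commonNeighbors_lex_self (a : V) (u v : W) :
    (G.lex H).commonNeighbors (a, u) (a, v) =
      G.neighborSet a ×ˢ Set.univ ∪ {a} ×ˢ H.commonNeighbors u v := by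
  ext ⟨b, w⟩
  simp only [commonNeighbors, neighborSet_lex, Set.mem_inter_iff, Set.mem_union, Set.mem_prod,
    mem_neighborSet, Set.mem_univ, and_true, Set.mem_singleton_iff]
  tauto

lemma commonNeighbors_lex_of_adj {a b : V} (hab : G.Adj a b) (u v : W) :
    (G.lex H).commonNeighbors (a, u) (b, v) =
      G.commonNeighbors a b ×ˢ Set.univ ∪ ({a} ×ˢ H.neighborSet u ∪ {b} ×ˢ H.neighborSet v) := by
  ext ⟨c, w⟩
  simp only [commonNeighbors, neighborSet_lex, Set.mem_inter_iff, Set.mem_union, Set.mem_prod,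
    mem_neighborSet, Set.mem_univ, and_true, Set.mem_singleton_iff]
  rcases eq_or_ne c a with rfl | hca <;> rcases eq_or_ne c b with rfl | hcb <;>
    simp_all [adj_comm]

lemma commonNeighbors_lex_of_not_adj {a b : V} (hne : a ≠ b) (hab : ¬G.Adj a b) (u v : W) :
    (G.lex H).commonNeighbors (a, u) (b, v) = G.commonNeighbors a b ×ˢ Set.univ := by
  ext ⟨c, w⟩
  simp only [commonNeighbors, neighborSet_lex, Set.mem_inter_iff, Set.mem_union, Set.mem_prod,
    mem_neighborSet, Set.mem_univ, and_true, Set.mem_singleton_iff]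
  rcases eq_or_ne c a with rfl | hca <;> rcases eq_or_ne c b with rfl | hcb <;>
    simp_all [adj_comm]

lemma ncard_commonNeighbors_lex_of_not_adj {a b : V} (hne : a ≠ b) (hab : ¬G.Adj a b)
    (u v : W) :
    ((G.lex H).commonNeighbors (a, u) (b, v)).ncard =
      (G.commonNeighbors a b).ncard * Nat.card W := by
  rw [commonNeighbors_lex_of_not_adj hne hab, Set.ncard_prod, Set.ncard_univ]

variable [Finite V] [Finite W]

lemma ncard_neighborSet_lex (a : V) (u : W) :
    ((G.lex H).neighborSet (a, u)).ncard =
      (G.neighborSet a).ncard * Nat.card W + (H.neighborSet u).ncard := by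
  rw [neighborSet_lex, Set.ncard_union_eq, Set.ncard_prod, Set.ncard_prod, Set.ncard_univ,
    Set.ncard_singleton, one_mul]
  simp [Set.disjoint_prod]

lemma ncard_commonNeighbors_lex_self (a : V) (u v : W) :
    ((G.lex H).commonNeighbors (a, u) (a, v)).ncard =
      (G.neighborSet a).ncard * Nat.card W + (H.commonNeighbors u v).ncard := by
  rw [commonNeighbors_lex_self, Set.ncard_union_eq, Set.ncard_prod, Set.ncard_prod,
    Set.ncard_univ, Set.ncard_singleton, one_mul]
  simp [Set.disjoint_prod]

lemma ncard_commonNeighbors_lex_of_adj {a b : V} (hab : G.Adj a b) (u v : W) :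
    ((G.lex H).commonNeighbors (a, u) (b, v)).ncard =
      (G.commonNeighbors a b).ncard * Nat.card W + (H.neighborSet u).ncard +
        (H.neighborSet v).ncard := by
  rw [commonNeighbors_lex_of_adj hab, Set.ncard_union_eq, Set.ncard_union_eq, Set.ncard_prod,
    Set.ncard_prod, Set.ncard_prod, Set.ncard_univ, Set.ncard_singleton, Set.ncard_singleton,
    one_mul, one_mul, add_assoc]
  · simp [Set.disjoint_prod, hab.ne]
  · simp [Set.disjoint_prod, notMem_commonNeighbors_left, notMem_commonNeighbors_right]

end Lex

lemma ncard_neighborSet_top_fin_two (u : Fin 2) :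
    ((⊤ : SimpleGraph (Fin 2)).neighborSet u).ncard = 1 := by
  rw [neighborSet_top, Set.ncard_compl, Set.ncard_singleton, Nat.card_fin]

lemma commonNeighbors_top_fin_two {u v : Fin 2} (huv : u ≠ v) :
    (⊤ : SimpleGraph (Fin 2)).commonNeighbors u v = ∅ := by
  rw [commonNeighbors_top_eq]
  ext w
  fin_cases u <;> fin_cases v <;> fin_cases w <;> simp_all

namespace IsSRGWith

variable {V : Type*} [Fintype V] {G : SimpleGraph V} [DecidableRel G.Adj] {n k ℓ μ : ℕ}

lemma ncard_neighborSet (h : G.IsSRGWith n k ℓ μ) (a : V) : (G.neighborSet a).ncard = k := by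
  rw [← Nat.card_coe_set_eq, Nat.card_eq_fintype_card, card_neighborSet_eq_degree, h.regular a]

lemma ncard_commonNeighbors_of_adj (h : G.IsSRGWith n k ℓ μ) {a b : V} (hab : G.Adj a b) :
    (G.commonNeighbors a b).ncard = ℓ := by
  rw [← Nat.card_coe_set_eq, Nat.card_eq_fintype_card, h.of_adj a b hab]

lemma ncard_commonNeighbors_of_not_adj (h : G.IsSRGWith n k ℓ μ) {a b : V} (hne : a ≠ b)
    (hab : ¬G.Adj a b) : (G.commonNeighbors a b).ncard = μ := by
  rw [← Nat.card_coe_set_eq, Nat.card_eq_fintype_card, h.of_not_adj hne hab]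

theorem isDezaGraph_lex_top_fin_two {V : Type} [Fintype V] {G : SimpleGraph V}
    [DecidableRel G.Adj] (h : G.IsSRGWith n k ℓ μ) (hμ : μ = ℓ + 1) :
    IsDezaGraph (G.lex (⊤ : SimpleGraph (Fin 2))) (2 * n) (2 * k + 1) (2 * k) (2 * μ) := by
  refine ⟨?_, fun ⟨a, u⟩ => ?_, fun ⟨a, u⟩ ⟨b, v⟩ hne => ?_⟩
  · rw [Nat.card_prod, Nat.card_eq_fintype_card, h.card, Nat.card_fin, mul_comm]
  · rw [ncard_neighborSet_lex, h.ncard_neighborSet, ncard_neighborSet_top_fin_two, Nat.card_fin,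
      mul_comm]
  rcases eq_or_ne a b with rfl | hab
  · have huv : u ≠ v := fun huv => hne (congrArg _ huv)
    right
    rw [ncard_commonNeighbors_lex_self, h.ncard_neighborSet, commonNeighbors_top_fin_two huv,
      Set.ncard_empty, Nat.card_fin, mul_comm, add_zero]
  left
  by_cases hadj : G.Adj a b
  · rw [ncard_commonNeighbors_lex_of_adj hadj, h.ncard_commonNeighbors_of_adj hadj,
      ncard_neighborSet_top_fin_two, ncard_neighborSet_top_fin_two, Nat.card_fin, hμ]
    ring
  · rw [ncard_commonNeighbors_lex_of_not_adj hab hadj, h.ncard_commonNeighbors_of_not_adj hab hadj,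
      Nat.card_fin, mul_comm]

end IsSRGWith

end SimpleGraph

open Finset

section QuadraticChar

variable {F : Type*} [Field F] [Fintype F] [DecidableEq F] (hc : ringChar F ≠ 2)
include hc

lemma sum_quadraticChar_sub (x : F) : ∑ z, quadraticChar F (x - z) = 0 :=
  ((Equiv.subLeft x).sum_comp _).trans (quadraticChar_sum_zero hc)

lemma sum_quadraticChar_sub_mul_sub {x y : F} (hxy : x ≠ y) :
    ∑ z, quadraticChar F ((x - z) * (y - z)) = -1 := by
  set χ := quadraticChar F
  have hd : x - y ≠ 0 := sub_ne_zero.mpr hxy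
  have hJ : jacobiSum χ χ = -χ (-1) := by
    have := jacobiSum_nontrivial_inv (quadraticChar_ne_one hc)
    rwa [(quadraticChar_isQuadratic F).inv] at this
  have hsq : χ (-1) * χ (-1) = 1 := by
    rw [← map_mul, neg_one_mul, neg_neg, map_one]
  calc ∑ z, χ ((x - z) * (y - z))
      = ∑ t, χ ((x - (x - (x - y) * t)) * (y - (x - (x - y) * t))) :=
        (((Equiv.mulLeft₀ _ hd).trans (Equiv.subLeft x)).sum_comp _).symm
    _ = ∑ t, χ (-1) * (χ t * χ (1 - t)) := by
        refine sum_congr rfl fun t _ => ?_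
        rw [show (x - (x - (x - y) * t)) * (y - (x - (x - y) * t)) =
            -1 * (x - y) ^ 2 * (t * (1 - t)) by ring,
          map_mul, map_mul, map_mul, quadraticChar_sq_one' hd, mul_one]
    _ = -1 := by rw [← mul_sum, ← jacobiSum, hJ, mul_neg, hsq]

lemma sum_one_add_quadraticChar_sub_mul {x y : F} (hxy : x ≠ y) :
    ∑ z, (1 + quadraticChar F (x - z)) * (1 + quadraticChar F (y - z)) =
      Fintype.card F - 1 := by
  simp only [add_mul, mul_add, one_mul, mul_one, ← map_mul, sum_add_distrib,
    sum_quadraticChar_sub hc, sum_quadraticChar_sub_mul_sub hc hxy, sum_const, card_univ,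
    Int.nsmul_eq_mul, add_zero]
  ring

end QuadraticChar

namespace SimpleGraph

section Paley

variable {F : Type*} [Field F]

def paley (hF : IsSquare (-1 : F)) : SimpleGraph F where
  Adj x y := x ≠ y ∧ IsSquare (x - y)
  symm := ⟨fun x y h => ⟨h.1.symm, by simpa using hF.mul h.2⟩⟩
  loopless := ⟨fun _ h => h.1 rfl⟩

variable [Fintype F] [DecidableEq F] {hF : IsSquare (-1 : F)} [DecidableRel (paley hF).Adj]

lemma one_add_quadraticChar_sub_eq_ite (x z : F) :
    1 + quadraticChar F (x - z) =
      2 * (if (paley hF).Adj x z then 1 else 0) + if x = z then 1 else 0 := by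
  rcases eq_or_ne x z with rfl | hxz
  · simp
  have hadj : (paley hF).Adj x z ↔ IsSquare (x - z) := and_iff_right hxz
  rcases quadraticChar_dichotomy (sub_ne_zero.mpr hxz) with h | h
  · simp [hxz, hadj, (quadraticChar_one_iff_isSquare (sub_ne_zero.mpr hxz)).mp h, h]
  · simp [hxz, hadj, quadraticChar_neg_one_iff_not_isSquare.mp h, h]

section

variable (hc : ringChar F ≠ 2)
include hc

lemma two_mul_degree_paley_add_one (x : F) :
    2 * (paley hF).degree x + 1 = Fintype.card F := by
  have key : (2 * (paley hF).degree x + 1 : ℤ) = Fintype.card F :=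
    calc (2 * (paley hF).degree x + 1 : ℤ)
        = ∑ z, (2 * (if (paley hF).Adj x z then 1 else 0) + if x = z then 1 else 0) := by
          rw [sum_add_distrib, ← mul_sum, sum_boole, sum_ite_eq, if_pos (mem_univ x),
            ← neighborFinset_eq_filter, card_neighborFinset_eq_degree]
      _ = ∑ z, (1 + quadraticChar F (x - z)) :=
          sum_congr rfl fun z _ => (one_add_quadraticChar_sub_eq_ite x z).symm
      _ = Fintype.card F := by
          rw [sum_add_distrib, sum_quadraticChar_sub hc, sum_const, card_univ]
          simp
  exact_mod_cast key

lemma four_mul_card_commonNeighbors_paley_add_one {x y : F} (hxy : x ≠ y) :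
    4 * (Fintype.card ((paley hF).commonNeighbors x y) +
      if (paley hF).Adj x y then 1 else 0) + 1 = Fintype.card F := by
  let adj (x z : F) : ℤ := if (paley hF).Adj x z then 1 else 0
  let same (x z : F) : ℤ := if x = z then 1 else 0
  have hprod (z : F) : (1 + quadraticChar F (x - z)) * (1 + quadraticChar F (y - z)) =
      4 * (adj x z * adj y z) + 2 * (same y z * adj x z) + 2 * (same x z * adj y z) +
        same x z * same y z := by
    rw [one_add_quadraticChar_sub_eq_ite, one_add_quadraticChar_sub_eq_ite]
    ring
  have hcard : ∑ z, adj x z * adj y z = Fintype.card ((paley hF).commonNeighbors x y) := by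
    simp only [adj, boole_mul, ← ite_and, sum_boole, Fintype.card_subtype,
      mem_commonNeighbors]
  have key := sum_one_add_quadraticChar_sub_mul hc hxy
  rw [Fintype.sum_congr _ _ hprod, sum_add_distrib, sum_add_distrib, sum_add_distrib, ← mul_sum,
    ← mul_sum, ← mul_sum, hcard] at key
  simp only [same, adj, boole_mul, sum_ite_eq, mem_univ, if_true, if_neg hxy.symm,
    (paley hF).adj_comm y x] at key
  split_ifs at key ⊢ <;> omega

end

theorem paley_isSRGWith (hq : Fintype.card F % 4 = 1) :
    (paley hF).IsSRGWith (Fintype.card F) ((Fintype.card F - 1) / 2)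
      ((Fintype.card F - 5) / 4) ((Fintype.card F - 1) / 4) := by
  have hc : ringChar F ≠ 2 := by
    rw [Ne, FiniteField.even_card_iff_char_two]
    omega
  refine ⟨rfl, fun x => ?_, fun x y hxy => ?_, fun x y hxy hnadj => ?_⟩
  · have := two_mul_degree_paley_add_one hc x
    omega
  · have := four_mul_card_commonNeighbors_paley_add_one hc hxy.ne
    rw [if_pos hxy] at this
    omega
  · have := four_mul_card_commonNeighbors_paley_add_one hc hxy
    rw [if_neg hnadj] at this
    omega

end Paley

end SimpleGraph

lemma exists_ne_zero_eq_sq_iff {M : Type*} [MonoidWithZero M] [NoZeroDivisors M] {a : M} :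
    (∃ w, w ≠ 0 ∧ a = w ^ 2) ↔ a ≠ 0 ∧ IsSquare a := by
  constructor
  · rintro ⟨w, hw, rfl⟩
    exact ⟨pow_ne_zero 2 hw, w, sq w⟩
  · rintro ⟨ha, w, rfl⟩
    exact ⟨w, fun hw => ha (by rw [hw, mul_zero]), (sq w).symm⟩

lemma paleyK2_eq_lex {p : ℕ} [Fact p.Prime] (hF : IsSquare (-1 : ZMod p)) :
    paleyK2 p = (SimpleGraph.paley hF).lex ⊤ := by
  have hpaley {x y : ZMod p} :
      (x ≠ y ∧ ∃ w, w ≠ 0 ∧ x - y = w ^ 2) ↔ (SimpleGraph.paley hF).Adj x y := by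
    rw [exists_ne_zero_eq_sq_iff, sub_ne_zero]
    exact ⟨fun h => ⟨h.1, h.2.2⟩, fun h => ⟨h.1, h.1, h.2⟩⟩
  ext ⟨x, i⟩ ⟨y, j⟩
  simp only [paleyK2, SimpleGraph.lex_adj, SimpleGraph.top_adj]
  refine or_congr_left ⟨fun ⟨hne, hxy, _⟩ => hpaley.mp ⟨hne, hxy⟩, fun h => ?_⟩
  exact ⟨h.ne, (hpaley.mpr h).2, (hpaley.mpr h.symm).2⟩

theorem stmt14 (p : ℕ) (hp : p.Prime) (hmod : p % 4 = 1) :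
    IsDezaGraph (paleyK2 p) (2 * p) p (p - 1) ((p - 1) / 2) := by
  have := Fact.mk hp
  classical
  have hq : Fintype.card (ZMod p) % 4 = 1 := by rwa [ZMod.card]
  have hF : IsSquare (-1 : ZMod p) := FiniteField.isSquare_neg_one_iff.mpr (by omega)
  have hDeza := (SimpleGraph.paley_isSRGWith (hF := hF) hq).isDezaGraph_lex_top_fin_two
    (by have := hp.two_le; rw [ZMod.card]; omega)
  rw [← paleyK2_eq_lex, ZMod.card] at hDeza
  convert hDeza using 2 <;> omega
end

section
/- Let p and q be primes with q − p = 4 and p ≡ q ≡ 3 (mod 4). Let Γ be the graph with vertex set (ℤ/pℤ) × (ℤ/qℤ) in which distinct vertices u and v are adjacent if and only if u − v ∈ S, where S consists of all pairs (0,b) with b ≠ 0, together with all pairs (a,b) with a ≠ 0 and b ≠ 0 such that exactly one of the following holds: a is a nonzero square in ℤ/pℤ, or b is a nonzero square in ℤ/qℤ. Then Γ is a Deza graph with parameters (pq, (pq+3)/2, (pq+7)/4, (pq+3)/4), and Γ is not strongly regular. -/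
/-- The connection set: all pairs `(0,b)` with `b ≠ 0`, together with all pairs `(a,b)`
with `a ≠ 0` and `b ≠ 0` such that exactly one of `a`, `b` is a nonzero square
(in `ZMod p`, resp. `ZMod q`). -/
def connSet (p q : ℕ) : Set (ZMod p × ZMod q) :=
  {s | (s.1 = 0 ∧ s.2 ≠ 0) ∨
    (s.1 ≠ 0 ∧ s.2 ≠ 0 ∧
      Xor' (∃ w : ZMod p, w ≠ 0 ∧ s.1 = w ^ 2) (∃ w : ZMod q, w ≠ 0 ∧ s.2 = w ^ 2))}

/-- The Cayley graph over `(ZMod p) × (ZMod q)` with connection set `connSet p q`: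
distinct `u` and `v` are adjacent iff `u - v` lies in the connection set. (Both
directions are required so that the graph is well defined in general; when
`p ≡ q ≡ 3 (mod 4)` they are equivalent.) -/
def gammaSixteen (p q : ℕ) : SimpleGraph (ZMod p × ZMod q) where
  Adj u v := u ≠ v ∧ u - v ∈ connSet p q ∧ v - u ∈ connSet p q
  symm := ⟨by rintro u v ⟨h1, h2, h3⟩; exact ⟨h1.symm, h3, h2⟩⟩
  loopless := ⟨by rintro u ⟨h1, -⟩; exact h1 rfl⟩

/-!
For a Cayley graph on a finite abelian group whose connection set `S` is symmetric, the number of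
common neighbours of `u` and `v` is the autocorrelation `∑ₓ 1_S(x) 1_S(x - (v - u))`. Writing
`δ` for the indicator of `0` and `χ`, `ψ` for the quadratic characters of `ZMod p`, `ZMod q`,
`2 · 1_S(a, b) = (1 + δ a)(1 - δ b) - χ(a) ψ(b)` is a difference of two product functions, so the
autocorrelation factors into one-dimensional correlations. These are elementary except
`∑ₓ χ(x) χ(x - c) = -1` for `c ≠ 0`, which is the Jacobi sum `J(χ, χ⁻¹) = -χ(-1)` in disguise.
For `v - u = (c, e) ≠ 0` and `q = p + 4` this gives `4 · #(common neighbours) = pq + 7` when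
`c = 0` or `χ(c) ψ(e) = 1`, and `pq + 3` otherwise; both cases occur on edges.
-/

open Finset

section Correlation

variable {G R : Type*} [AddCommGroup G] [Fintype G] [CommRing R]

def corr (f g : G → R) (d : G) : R := ∑ x, f x * g (x - d)

@[simp] lemma corr_add_left (f₁ f₂ g : G → R) (d : G) :
    corr (f₁ + f₂) g d = corr f₁ g d + corr f₂ g d := by
  simp [corr, add_mul, sum_add_distrib]

@[simp] lemma corr_add_right (f g₁ g₂ : G → R) (d : G) :
    corr f (g₁ + g₂) d = corr f g₁ d + corr f g₂ d := by
  simp [corr, mul_add, sum_add_distrib]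

@[simp] lemma corr_sub_left (f₁ f₂ g : G → R) (d : G) :
    corr (f₁ - f₂) g d = corr f₁ g d - corr f₂ g d := by
  simp [corr, sub_mul, sum_sub_distrib]

@[simp] lemma corr_sub_right (f g₁ g₂ : G → R) (d : G) :
    corr f (g₁ - g₂) d = corr f g₁ d - corr f g₂ d := by
  simp [corr, mul_sub, sum_sub_distrib]

@[simp] lemma corr_one_left (g : G → R) (d : G) : corr 1 g d = ∑ x, g x := by
  simpa [corr] using (Equiv.subRight d).sum_comp g

@[simp] lemma corr_one_right (f : G → R) (d : G) : corr f 1 d = ∑ x, f x := by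
  simp [corr]

@[simp] lemma corr_single_left [DecidableEq G] (g : G → R) (d : G) :
    corr (Pi.single 0 1) g d = g (-d) := by
  simp [corr, Pi.single_apply]

@[simp] lemma corr_single_right [DecidableEq G] (f : G → R) (d : G) :
    corr f (Pi.single 0 1) d = f d := by
  simp [corr, Pi.single_apply, sub_eq_zero]

lemma corr_const_mul (c : R) (f g : G → R) (d : G) :
    corr (fun x ↦ c * f x) (fun x ↦ c * g x) d = c ^ 2 * corr f g d := by
  simp only [corr, mul_sum]
  exact sum_congr rfl fun _ _ ↦ by ring

lemma corr_prod {H : Type*} [AddCommGroup H] [Fintype H] (f f' : G → R) (g g' : H → R)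
    (d : G × H) :
    corr (fun x ↦ f x.1 * g x.2) (fun x ↦ f' x.1 * g' x.2) d
      = corr f f' d.1 * corr g g' d.2 := by
  simp only [corr, Fintype.sum_prod_type, sum_mul_sum, Prod.fst_sub, Prod.snd_sub]
  exact sum_congr rfl fun _ _ ↦ sum_congr rfl fun _ _ ↦ by ring

end Correlation

section QuadraticChar

variable {F : Type*} [Field F] [Fintype F] [DecidableEq F]

lemma corr_quadraticChar_self (hF : ringChar F ≠ 2) (d : F) :
    corr (quadraticChar F) (quadraticChar F) d
      = if d = 0 then (Fintype.card F : ℤ) - 1 else -1 := by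
  split_ifs with hd
  · subst hd
    calc corr (quadraticChar F) (quadraticChar F) 0
        = ∑ x, (1 - (Pi.single 0 1 : F → ℤ) x) := by
          refine sum_congr rfl fun x _ ↦ ?_
          rw [sub_zero, ← sq]
          rcases eq_or_ne x 0 with rfl | hx
          · rw [quadraticChar_zero, Pi.single_eq_same]; ring
          · rw [quadraticChar_sq_one hx, Pi.single_eq_of_ne hx, sub_zero]
      _ = Fintype.card F - 1 := by simp [sum_sub_distrib]
  · have hχ := quadraticChar_sq_one (neg_ne_zero.mpr (one_ne_zero' F))
    calc corr (quadraticChar F) (quadraticChar F) d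
        = ∑ y, quadraticChar F (d * y) * quadraticChar F (d * y - d) :=
          (Equiv.sum_comp (Equiv.mulLeft₀ d hd) _).symm
      _ = ∑ y, quadraticChar F d ^ 2 * quadraticChar F (-1)
            * (quadraticChar F y * quadraticChar F (1 - y)) := by
          refine sum_congr rfl fun y _ ↦ ?_
          rw [show d * y - d = d * (-1) * (1 - y) by ring]
          simp only [map_mul]; ring
      _ = quadraticChar F (-1) * jacobiSum (quadraticChar F) (quadraticChar F)⁻¹ := by
          rw [quadraticChar_sq_one hd, (quadraticChar_isQuadratic F).inv, jacobiSum, mul_sum]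
          simp
      _ = -1 := by
          rw [jacobiSum_nontrivial_inv (quadraticChar_ne_one hF), mul_neg, ← sq, hχ]

lemma exists_ne_zero_eq_sq_iff_s16 {a : F} (ha : a ≠ 0) :
    (∃ w, w ≠ 0 ∧ a = w ^ 2) ↔ quadraticChar F a = 1 := by
  rw [quadraticChar_one_iff_isSquare ha]
  constructor
  · rintro ⟨w, -, rfl⟩
    exact ⟨w, sq w⟩
  · rintro ⟨w, rfl⟩
    exact ⟨w, fun hw ↦ ha (by simp [hw]), (sq w).symm⟩

lemma quadraticChar_neg_of_card_mod_four
    (hF : Fintype.card F % 4 = 3) (a : F) : quadraticChar F (-a) = -quadraticChar F a := by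
  have h : quadraticChar F (-1) = -1 := quadraticChar_neg_one_iff_not_isSquare.mpr
    (by rw [FiniteField.isSquare_neg_one_iff, not_not]; exact hF)
  rw [neg_eq_neg_one_mul a, map_mul, h, neg_one_mul]

end QuadraticChar

section Cayley

variable {G : Type*} [AddCommGroup G] [Fintype G] {Γ : SimpleGraph G} {S : Set G}

lemma ncard_commonNeighbors_eq_corr (hΓ : ∀ u v, Γ.Adj u v ↔ v - u ∈ S) (u v : G) :
    ((Γ.commonNeighbors u v).ncard : ℤ) = corr (S.indicator 1) (S.indicator 1) (v - u) := by
  classical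
  have hN : Γ.commonNeighbors u v = {x | x - u ∈ S ∧ x - v ∈ S} := by
    ext x; simp [SimpleGraph.commonNeighbors, hΓ]
  rw [hN, Set.ncard_eq_toFinset_card', Set.toFinset_ofPred, natCast_card_filter, corr,
    ← Equiv.sum_comp (Equiv.addRight u)]
  refine sum_congr rfl fun y _ ↦ ?_
  simp [Set.indicator_apply, ← ite_and, and_comm, sub_sub_eq_add_sub, add_comm]

end Cayley

section ConnSet

variable {p q : ℕ} [Fact p.Prime] [Fact q.Prime]

lemma mem_connSet_iff (s : ZMod p × ZMod q) :
    s ∈ connSet p q ↔ s.2 ≠ 0 ∧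
      (s.1 = 0 ∨ quadraticChar (ZMod p) s.1 * quadraticChar (ZMod q) s.2 = -1) := by
  obtain ⟨a, b⟩ := s
  rcases eq_or_ne b 0 with rfl | hb
  · simp [connSet]
  rcases eq_or_ne a 0 with rfl | ha
  · simp [connSet, hb]
  simp only [connSet, Set.mem_ofPred_eq, exists_ne_zero_eq_sq_iff_s16 ha,
    exists_ne_zero_eq_sq_iff_s16 hb]
  rcases quadraticChar_dichotomy ha with h₁ | h₁ <;>
    rcases quadraticChar_dichotomy hb with h₂ | h₂ <;> simp [h₁, h₂, ha, hb, Xor']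

lemma two_mul_indicator_connSet :
    (fun s ↦ 2 * (connSet p q).indicator 1 s)
      = (fun s ↦ (1 + Pi.single 0 1 : ZMod p → ℤ) s.1 * (1 - Pi.single 0 1 : ZMod q → ℤ) s.2)
        - fun s ↦ quadraticChar (ZMod p) s.1 * quadraticChar (ZMod q) s.2 := by
  ext ⟨a, b⟩
  rcases eq_or_ne b 0 with rfl | hb
  · simp [mem_connSet_iff]
  rcases eq_or_ne a 0 with rfl | ha
  · simp [mem_connSet_iff, hb]
  rcases quadraticChar_dichotomy ha with h₁ | h₁ <;>
    rcases quadraticChar_dichotomy hb with h₂ | h₂ <;>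
    simp [-quadraticChar_apply, mem_connSet_iff, ha, hb, h₁, h₂]

lemma neg_mem_connSet_iff (hp4 : p % 4 = 3) (hq4 : q % 4 = 3) (s : ZMod p × ZMod q) :
    -s ∈ connSet p q ↔ s ∈ connSet p q := by
  simp [mem_connSet_iff, quadraticChar_neg_of_card_mod_four (F := ZMod p) (by rwa [ZMod.card]),
    quadraticChar_neg_of_card_mod_four (F := ZMod q) (by rwa [ZMod.card])]

lemma gammaSixteen_adj_iff (hp4 : p % 4 = 3) (hq4 : q % 4 = 3) (u v : ZMod p × ZMod q) :
    (gammaSixteen p q).Adj u v ↔ v - u ∈ connSet p q := by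
  refine ⟨fun h ↦ h.2.2, fun h ↦ ⟨?_, ?_, h⟩⟩
  · rintro rfl
    simp [mem_connSet_iff] at h
  · rwa [← neg_sub, neg_mem_connSet_iff hp4 hq4]

lemma four_mul_corr_indicator_connSet (hp4 : p % 4 = 3) (hq4 : q % 4 = 3)
    (d : ZMod p × ZMod q) :
    4 * corr ((connSet p q).indicator 1) ((connSet p q).indicator 1) d
      = (p + 2 + if d.1 = 0 then 1 else 0) * (q - 2 + if d.2 = 0 then 1 else 0)
        + 2 * (quadraticChar (ZMod p) d.1 * quadraticChar (ZMod q) d.2)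
        + (if d.1 = 0 then (p : ℤ) - 1 else -1) * (if d.2 = 0 then (q : ℤ) - 1 else -1) := by
  have hp : ringChar (ZMod p) ≠ 2 := by rw [ZMod.ringChar_zmod_n]; omega
  have hq : ringChar (ZMod q) ≠ 2 := by rw [ZMod.ringChar_zmod_n]; omega
  rw [show (4 : ℤ) = 2 ^ 2 by norm_num, ← corr_const_mul, two_mul_indicator_connSet]
  simp only [corr_sub_left, corr_sub_right, corr_prod]
  simp only [corr_add_left, corr_add_right, corr_one_left, corr_one_right, corr_single_left,
    corr_single_right, corr_quadraticChar_self hp, corr_quadraticChar_self hq,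
    quadraticChar_sum_zero hp, quadraticChar_sum_zero hq,
    quadraticChar_neg_of_card_mod_four (F := ZMod p) (by rwa [ZMod.card]),
    quadraticChar_neg_of_card_mod_four (F := ZMod q) (by rwa [ZMod.card]),
    Pi.add_apply, Pi.one_apply, Pi.single_apply, sum_add_distrib, sum_const, card_univ, ZMod.card,
    Int.nsmul_eq_mul, mul_one, sum_ite_eq', mem_univ, ↓reduceIte]
  ring

lemma ncard_commonNeighbors_gammaSixteen (hqp : q = p + 4) (hp4 : p % 4 = 3) (hq4 : q % 4 = 3)
    {u v : ZMod p × ZMod q} (huv : u ≠ v) :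
    ((gammaSixteen p q).commonNeighbors u v).ncard =
      if (v - u).1 = 0 ∨ quadraticChar (ZMod p) (v - u).1 * quadraticChar (ZMod q) (v - u).2 = 1
      then (p * q + 7) / 4 else (p * q + 3) / 4 := by
  have hqz : (q : ℤ) = p + 4 := by exact_mod_cast hqp
  have hd : v - u ≠ 0 := sub_ne_zero.mpr huv.symm
  have h := four_mul_corr_indicator_connSet hp4 hq4 (v - u)
  rw [← ncard_commonNeighbors_eq_corr (gammaSixteen_adj_iff hp4 hq4)] at h
  generalize v - u = d at h hd ⊢
  obtain ⟨c, e⟩ := d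
  suffices 4 * (((gammaSixteen p q).commonNeighbors u v).ncard : ℤ) =
      if c = 0 ∨ quadraticChar (ZMod p) c * quadraticChar (ZMod q) e = 1
      then (p * q + 7 : ℤ) else p * q + 3 by
    split_ifs at this ⊢ <;> omega
  rcases eq_or_ne c 0 with rfl | hc
  · have he : e ≠ 0 := by rintro rfl; exact hd rfl
    simp only [↓reduceIte, he, quadraticChar_zero, true_or] at h ⊢
    linarith
  rcases eq_or_ne e 0 with rfl | he
  · simp only [↓reduceIte, hc, quadraticChar_zero, mul_zero, zero_ne_one, or_self] at h ⊢
    linarith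
  rcases quadraticChar_dichotomy hc with h₁ | h₁ <;>
    rcases quadraticChar_dichotomy he with h₂ | h₂ <;>
    simp only [↓reduceIte, hc, he, h₁, h₂, mul_one, mul_neg, neg_neg, Int.reduceNeg, reduceCtorEq,
      or_true, or_self] at h ⊢ <;> linarith

lemma two_mul_ncard_neighborSet_gammaSixteen (hp4 : p % 4 = 3) (hq4 : q % 4 = 3)
    (v : ZMod p × ZMod q) :
    2 * (((gammaSixteen p q).neighborSet v).ncard : ℤ) = (p + 1) * (q - 1) := by
  have h := four_mul_corr_indicator_connSet hp4 hq4 (v - v)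
  rw [← ncard_commonNeighbors_eq_corr (gammaSixteen_adj_iff hp4 hq4), SimpleGraph.commonNeighbors,
    Set.inter_self, sub_self] at h
  simp only [Prod.fst_zero, Prod.snd_zero, ↓reduceIte, quadraticChar_zero, mul_zero] at h
  linarith

end ConnSet

theorem stmt16 (p q : ℕ) (hp : p.Prime) (hq : q.Prime) (hqp : q = p + 4)
    (hp4 : p % 4 = 3) (hq4 : q % 4 = 3) :
    IsDezaGraph (gammaSixteen p q) (p * q) ((p * q + 3) / 2) ((p * q + 7) / 4)
      ((p * q + 3) / 4) ∧
    ¬ IsSRG (gammaSixteen p q) := by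
  have := Fact.mk hp
  have := Fact.mk hq
  refine ⟨⟨by simp [Nat.card_eq_fintype_card], fun v ↦ ?_, fun u v huv ↦ ?_⟩, ?_⟩
  · have h := two_mul_ncard_neighborSet_gammaSixteen hp4 hq4 v
    have : 2 * (((gammaSixteen p q).neighborSet v).ncard : ℤ) = p * q + 3 := by
      rw [h, hqp]; push_cast; ring
    omega
  · rw [ncard_commonNeighbors_gammaSixteen hqp hp4 hq4 huv]
    split_ifs <;> simp
  · rintro ⟨lam, -, hlam, -⟩
    obtain ⟨n, hn⟩ := quadraticChar_exists_neg_one (F := ZMod q)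
      (by rw [ZMod.ringChar_zmod_n]; omega)
    have hn0 : n ≠ 0 := by rintro rfl; simp at hn
    have hadj₁ : (gammaSixteen p q).Adj 0 (0, 1) :=
      (gammaSixteen_adj_iff hp4 hq4 _ _).mpr (by simp [mem_connSet_iff])
    have hadj₂ : (gammaSixteen p q).Adj 0 (1, n) :=
      (gammaSixteen_adj_iff hp4 hq4 _ _).mpr
        (by simp [-quadraticChar_apply, mem_connSet_iff, hn, hn0])
    have h₁ := hlam _ _ hadj₁
    have h₂ := hlam _ _ hadj₂
    rw [ncard_commonNeighbors_gammaSixteen hqp hp4 hq4 hadj₁.ne] at h₁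
    rw [ncard_commonNeighbors_gammaSixteen hqp hp4 hq4 hadj₂.ne] at h₂
    simp only [sub_zero, map_one, one_mul, hn, true_or, ↓reduceIte, one_ne_zero, Int.reduceNeg,
      reduceCtorEq, or_self] at h₁ h₂
    omega
end
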